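/- arXiv:2212.13241 — 6 statements merged into one kernel-verified Lean document; each statement's English description precedes it below -/
import Mathlib

section
/- Let n ≥ 1, k ≥ 1, let x = (g; p) ∈ Z_k ≀ S_n and let z = (f; t) be an element of the subgroup Z_k ≀ S_{n−1} (so t fixes the last point ν of Fin n and f(ν) = 0). Then z⁻¹·x·z has the same marked type as x: T(z⁻¹·x·z) = T(x), the orbit of ν under the permutation part of z⁻¹·x·z has the same cardinality as the orbit of ν under p, and the cycle sum of z⁻¹·x·z at ν equals the cycle sum of x at ν. -/
open scoped Classical

/-- The generalized symmetric group `Z_k ≀ S_n`: underlying set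
`(Fin n → ZMod k) × Perm (Fin n)`. -/
def GS (k n : ℕ) : Type := (Fin n → ZMod k) × Equiv.Perm (Fin n)

namespace GS

variable {k n : ℕ}

instance : Mul (GS k n) := ⟨fun x y => (fun i => x.1 (y.2⁻¹ i) + y.1 i, y.2 * x.2)⟩
instance : One (GS k n) := ⟨((0 : Fin n → ZMod k), 1)⟩
instance : Inv (GS k n) := ⟨fun x => (fun i => - x.1 (x.2 i), x.2⁻¹)⟩

theorem mul_def (x y : GS k n) :
    x * y = (fun i => x.1 (y.2⁻¹ i) + y.1 i, y.2 * x.2) := rfl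

theorem one_def : (1 : GS k n) = ((0 : Fin n → ZMod k), 1) := rfl

theorem inv_def (x : GS k n) : x⁻¹ = (fun i => - x.1 (x.2 i), x.2⁻¹) := rfl

instance : Group (GS k n) where
  mul_assoc x y z := by
    refine Prod.ext ?_ (mul_assoc z.2 y.2 x.2).symm
    funext i
    show x.1 (y.2⁻¹ (z.2⁻¹ i)) + y.1 (z.2⁻¹ i) + z.1 i
        = x.1 ((z.2 * y.2)⁻¹ i) + (y.1 (z.2⁻¹ i) + z.1 i)
    rw [mul_inv_rev, Equiv.Perm.mul_apply, add_assoc]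
  one_mul x := by
    refine Prod.ext ?_ (mul_one x.2)
    funext i
    show (0 : ZMod k) + x.1 i = x.1 i
    rw [zero_add]
  mul_one x := by
    refine Prod.ext ?_ (one_mul x.2)
    funext i
    show x.1 ((1 : Equiv.Perm (Fin n))⁻¹ i) + 0 = x.1 i
    simp
  inv_mul_cancel x := by
    refine Prod.ext ?_ (mul_inv_cancel x.2)
    funext i
    show - x.1 (x.2 (x.2⁻¹ i)) + x.1 i = 0
    simp

/-- The orbit of `i` under (the cyclic subgroup generated by) `p`, as a finset. -/
noncomputable def orbitOf (p : Equiv.Perm (Fin n)) (i : Fin n) : Finset (Fin n) :=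
  Finset.univ.filter fun j => p.SameCycle i j

/-- The cycle sum of `x = (g; p)` at `i`: the sum of `g` over the orbit of `i` under `p`. -/
noncomputable def cycleSum (x : GS k n) (i : Fin n) : ZMod k :=
  ∑ j ∈ orbitOf x.2 i, x.1 j

/-- The type invariant of `x = (g; p)`: the multiset, indexed by the orbits `O` of the cyclic
subgroup generated by `p` on `Fin n`, of the pairs `(card O, ∑_{j ∈ O} g j)`. -/
noncomputable def typeInv (x : GS k n) : Multiset (ℕ × ZMod k) :=
  (Finset.univ.image fun i => orbitOf x.2 i).val.map fun O => (O.card, ∑ j ∈ O, x.1 j)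

/-- The last point of `Fin n`. -/
def lastPt (n : ℕ) (hn : 1 ≤ n) : Fin n := ⟨n - 1, by omega⟩

/-- The subgroup `Z_k ≀ S_{n-1}` of `Z_k ≀ S_n`: elements `(f; t)` with `t` fixing the last
point `ν` of `Fin n` and `f ν = 0`. -/
def K (k n : ℕ) (hn : 1 ≤ n) : Subgroup (GS k n) where
  carrier := {z | z.2 (lastPt n hn) = lastPt n hn ∧ z.1 (lastPt n hn) = 0}
  one_mem' := by
    constructor
    · show (1 : Equiv.Perm (Fin n)) (lastPt n hn) = lastPt n hn
      rfl
    · rfl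
  mul_mem' := by
    rintro ⟨f, t⟩ ⟨f', t'⟩ ⟨ht, hf⟩ ⟨ht', hf'⟩
    constructor
    · show t' (t (lastPt n hn)) = lastPt n hn
      rw [ht, ht']
    · show f (t'⁻¹ (lastPt n hn)) + f' (lastPt n hn) = 0
      rw [Equiv.Perm.inv_eq_iff_eq.2 (show lastPt n hn = t' (lastPt n hn) from ht'.symm),
        show f (lastPt n hn) = 0 from hf, show f' (lastPt n hn) = 0 from hf', add_zero]
  inv_mem' := by
    rintro ⟨f, t⟩ ⟨ht, hf⟩
    constructor
    · show t⁻¹ (lastPt n hn) = lastPt n hn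
      exact Equiv.Perm.inv_eq_iff_eq.2 (show lastPt n hn = t (lastPt n hn) from ht.symm)
    · show - f (t (lastPt n hn)) = 0
      rw [show t (lastPt n hn) = lastPt n hn from ht,
        show f (lastPt n hn) = 0 from hf, neg_zero]

end GS

section Aux

open GS Finset

variable {k n : ℕ}

theorem GS.orbitOf_conj (p t : Equiv.Perm (Fin n)) (i : Fin n) :
    orbitOf (t * p * t⁻¹) i = (orbitOf p (t⁻¹ i)).image t := by
  ext j
  simp only [orbitOf, Finset.mem_filter, Finset.mem_univ, true_and, Finset.mem_image,
    Equiv.Perm.sameCycle_conj]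
  constructor
  · intro h; exact ⟨t⁻¹ j, h, by simp⟩
  · rintro ⟨a, h, rfl⟩; simpa using h

theorem GS.mem_orbitOf {p : Equiv.Perm (Fin n)} {a j : Fin n} :
    j ∈ orbitOf p a ↔ p.SameCycle a j := by
  simp [orbitOf]

theorem GS.sum_orbit_inv_apply {M : Type*} [AddCommMonoid M] (p : Equiv.Perm (Fin n)) (a : Fin n)
    (F : Fin n → M) :
    ∑ j ∈ orbitOf p a, F (p⁻¹ j) = ∑ j ∈ orbitOf p a, F j := by
  apply Finset.sum_nbij' (i := fun j => p⁻¹ j) (j := fun j => p j)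
  · intro j hj
    rw [GS.mem_orbitOf] at hj ⊢
    exact hj.symm_apply_right
  · intro j hj
    rw [GS.mem_orbitOf] at hj ⊢
    exact hj.apply_right
  · intro j _; simp
  · intro j _; simp
  · intro j _; rfl

theorem GS.sum_conj (f g : Fin n → ZMod k) (p t : Equiv.Perm (Fin n)) (a : Fin n) :
    ∑ j ∈ (orbitOf p a).image t, (-f (t (p⁻¹ (t⁻¹ j))) + g (t⁻¹ j) + f j)
      = ∑ j ∈ orbitOf p a, g j := by
  rw [Finset.sum_image (fun i _ j _ h => t.injective h)]
  simp only [show ∀ i, t⁻¹ (t i) = i from fun i => t.symm_apply_apply i]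
  rw [Finset.sum_add_distrib, Finset.sum_add_distrib, Finset.sum_neg_distrib]
  rw [GS.sum_orbit_inv_apply p a (fun j => f (t j))]
  abel

end Aux

open GS in
/-- If `z ∈ Z_k ≀ S_{n-1}` then `z⁻¹ * x * z` has the same marked type as `x`. -/
theorem marked_type_conj_invariant (k n : ℕ) (hk : 1 ≤ k) (hn : 1 ≤ n)
    (x z : GS k n) (hz : z ∈ K k n hn) :
    typeInv (z⁻¹ * x * z) = typeInv x ∧
    (orbitOf (z⁻¹ * x * z).2 (lastPt n hn)).card = (orbitOf x.2 (lastPt n hn)).card ∧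
    cycleSum (z⁻¹ * x * z) (lastPt n hn) = cycleSum x (lastPt n hn) := by
  obtain ⟨ht, hf⟩ := hz
  set ν := lastPt n hn with hν
  have hw2 : (z⁻¹ * x * z).2 = z.2 * x.2 * z.2⁻¹ := by
    show z.2 * (x.2 * z.2⁻¹) = z.2 * x.2 * z.2⁻¹
    rw [mul_assoc]
  have hw1 : ∀ i, (z⁻¹ * x * z).1 i
      = -z.1 (z.2 (x.2⁻¹ (z.2⁻¹ i))) + x.1 (z.2⁻¹ i) + z.1 i := fun i => rfl
  have htinv : z.2⁻¹ ν = ν := z.2.injective (by rw [show z.2 (z.2⁻¹ ν) = ν from z.2.apply_symm_apply ν, ht])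
  have horb : ∀ i, orbitOf (z⁻¹ * x * z).2 i
      = (orbitOf x.2 (z.2⁻¹ i)).image z.2 := by
    intro i
    rw [hw2, GS.orbitOf_conj]
  have hsum : ∀ a, ∑ j ∈ (orbitOf x.2 a).image z.2, (z⁻¹ * x * z).1 j
      = ∑ j ∈ orbitOf x.2 a, x.1 j := by
    intro a
    rw [Finset.sum_congr rfl (fun j _ => hw1 j), GS.sum_conj]
  refine ⟨?_, ?_, ?_⟩
  · unfold typeInv
    have himg : Finset.univ.image (fun i => orbitOf (z⁻¹ * x * z).2 i)
        = (Finset.univ.image (fun i => orbitOf x.2 i)).image (Finset.image z.2) := by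
      have h1 : Finset.univ.image (fun i => orbitOf (z⁻¹ * x * z).2 i)
          = (Finset.univ.image (fun i => z.2⁻¹ i)).image
              (fun a => (orbitOf x.2 a).image z.2) := by
        rw [Finset.image_image]
        exact Finset.image_congr (fun i _ => horb i)
      have h2 : Finset.univ.image (fun i => z.2⁻¹ i) = Finset.univ := by
        ext j
        simp only [Finset.mem_image, Finset.mem_univ, true_and, iff_true]
        exact ⟨z.2 j, by simp⟩
      rw [h1, h2, Finset.image_image]
      rfl
    rw [himg, Finset.image_val_of_injOn
      ((Finset.image_injective z.2.injective).injOn),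
      Multiset.map_map]
    refine Multiset.map_congr rfl ?_
    intro O hO
    obtain ⟨a, -, rfl⟩ := Finset.mem_image.mp (Finset.mem_def.mpr hO)
    show ((((orbitOf x.2 a).image z.2).card : ℕ),
        ∑ j ∈ (orbitOf x.2 a).image z.2, (z⁻¹ * x * z).1 j)
        = ((orbitOf x.2 a).card, ∑ j ∈ orbitOf x.2 a, x.1 j)
    rw [Finset.card_image_of_injective _ z.2.injective, hsum]
  · rw [horb, htinv, Finset.card_image_of_injective _ z.2.injective]
  · unfold cycleSum
    rw [horb, htinv, hsum]
end

section
/- Let n ≥ 1, k ≥ 1, let x = (g; p) and y = (h; q) be elements of Z_k ≀ S_n, and let t ∈ Perm (Fin n) be a permutation fixing the last point ν of Fin n such that t conjugates p to q, sending each cycle (c₁, …, c_r) of p to the cycle (t(c₁), …, t(c_r)) of q, and such that for every i ∈ Fin n the cycle sum of y at t(i) equals the cycle sum of x at i. Then there exists f : Fin n → ZMod k with f(ν) = 0 such that, setting z = (f; t) ∈ Z_k ≀ S_{n−1}, one has y = z⁻¹·x·z. -/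
open scoped Classical

/-- Build an element of `Z_k ≀ S_n` from its two components. -/
def GS.pair {k n : ℕ} (g : Fin n → ZMod k) (p : Equiv.Perm (Fin n)) : GS k n := (g, p)

namespace GSAux

variable {n k : ℕ}

/-- abstract key lemma: solve the cocycle equation along cycles. -/
theorem exists_potential (p : Equiv.Perm (Fin n)) (c : Fin n → ZMod k) (ν : Fin n)
    (hsum : ∀ i : Fin n, ∑ j ∈ (Finset.univ.filter fun j => p.SameCycle i j), c j = 0) :
    ∃ F : Fin n → ZMod k, F ν = 0 ∧ ∀ j, F (p j) - F j = c (p j) := by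
  classical
  -- representative of each cycle
  have horb : ∀ i : Fin n, i ∈ (Finset.univ.filter fun j => p.SameCycle i j) := by
    intro i; simp [Equiv.Perm.SameCycle.refl]
  set rep : Fin n → Fin n := fun i =>
    if p.SameCycle ν i then ν else (Finset.univ.filter fun j => p.SameCycle i j).min' ⟨i, horb i⟩
    with hrep
  have hrep_same : ∀ i, p.SameCycle (rep i) i := by
    intro i
    by_cases hc : p.SameCycle ν i
    · simpa [hrep, hc] using hc
    · have hm := ((Finset.univ.filter fun j => p.SameCycle i j).min'_mem ⟨i, horb i⟩)
      simp only [Finset.mem_filter] at hm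
      simpa [hrep, hc] using hm.2.symm
  have hrep_nu : rep ν = ν := by
    simp only [hrep]
    rw [if_pos (Equiv.Perm.SameCycle.refl p ν)]
  have hrep_const : ∀ i j, p.SameCycle i j → rep i = rep j := by
    intro i j hij
    by_cases hc : p.SameCycle ν i
    · simp [hrep, hc, hc.trans hij]
    · have hc' : ¬ p.SameCycle ν j := fun h => hc (h.trans hij.symm)
      have : (Finset.univ.filter fun m => p.SameCycle i m)
          = (Finset.univ.filter fun m => p.SameCycle j m) := by
        ext m; simp only [Finset.mem_filter, Finset.mem_univ, true_and]
        exact ⟨fun h => hij.symm.trans h, fun h => hij.trans h⟩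
      simp [hrep, hc, hc', this]
  -- exponents
  have hex : ∀ i : Fin n, ∃ m : ℕ, (p ^ m) (rep i) = i := by
    intro i
    obtain ⟨m, _, hm⟩ := (hrep_same i).exists_pow_eq'
    exact ⟨m, hm⟩
  set m : Fin n → ℕ := fun i => Nat.find (hex i) with hm
  have hmspec : ∀ i, (p ^ m i) (rep i) = i := fun i => Nat.find_spec (hex i)
  -- partial sums
  set S : Fin n → ℕ → ZMod k := fun r a => ∑ u ∈ Finset.range a, c ((p ^ (u + 1)) r) with hS
  -- periodicity of partial sums
  have hper : ∀ r : Fin n, ∀ a b : ℕ, (p ^ a) r = (p ^ b) r → S r a = S r b := by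
    have key : ∀ r : Fin n, ∀ a b : ℕ, a ≤ b → (p ^ a) r = (p ^ b) r → S r a = S r b := by
      intro r a b hab heq
      -- minimal positive period d
      have hdex : ∃ d : ℕ, 0 < d ∧ (p ^ d) r = r := by
        refine ⟨orderOf p, orderOf_pos p, ?_⟩
        rw [pow_orderOf_eq_one]; rfl
      set d : ℕ := Nat.find hdex with hd
      obtain ⟨hdpos, hdr⟩ : 0 < d ∧ (p ^ d) r = r := Nat.find_spec hdex
      have hdmin : ∀ e, 0 < e → (p ^ e) r = r → d ≤ e := fun e he1 he2 =>
        Nat.find_le ⟨he1, he2⟩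
      have hmul : ∀ q : ℕ, (p ^ (d * q)) r = r := by
        intro q; induction q with
        | zero => simp
        | succ q ih =>
          have : d * (q + 1) = d * q + d := by ring
          rw [this, pow_add, Equiv.Perm.mul_apply, hdr, ih]
      have hmod : ∀ a : ℕ, (p ^ a) r = (p ^ (a % d)) r := by
        intro a
        conv_lhs => rw [(Nat.mod_add_div a d).symm]
        rw [pow_add, Equiv.Perm.mul_apply, hmul]
      have hfix : ∀ e : ℕ, (p ^ e) r = r → d ∣ e := by
        intro e he
        rcases Nat.eq_zero_or_pos (e % d) with h0 | h0
        · exact Nat.dvd_of_mod_eq_zero h0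
        · have : (p ^ (e % d)) r = r := by rw [← hmod, he]
          have := hdmin _ h0 this
          have := Nat.mod_lt e hdpos
          omega
      have hinj : ∀ u v, u < d → v < d → (p ^ u) r = (p ^ v) r → u = v := by
        have base : ∀ u v, u ≤ v → u < d → v < d → (p ^ u) r = (p ^ v) r → u = v := by
          intro u v huv hu hv heq'
          have : (p ^ v) r = (p ^ u) ((p ^ (v - u)) r) := by
            rw [← Equiv.Perm.mul_apply, ← pow_add, show u + (v - u) = v from by omega]
          have hfixuv : (p ^ (v - u)) r = r := by
            apply (p ^ u).injective
            rw [← this, heq']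
          rcases Nat.eq_zero_or_pos (v - u) with h0 | h0
          · omega
          · have := hdmin _ h0 hfixuv; omega
        intro u v hu hv heq'
        rcases le_total u v with h | h
        · exact base u v h hu hv heq'
        · exact (base v u h hv hu heq'.symm).symm
      -- sum over one full period (starting anywhere) is 0
      have horbit : (Finset.univ.filter fun j => p.SameCycle r j)
          = (Finset.range d).image fun u => (p ^ u) r := by
        ext j
        simp only [Finset.mem_filter, Finset.mem_univ, true_and, Finset.mem_image,
          Finset.mem_range]
        constructor
        · intro hj
          obtain ⟨mm, _, hmm⟩ := hj.exists_pow_eq'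
          exact ⟨mm % d, Nat.mod_lt _ hdpos, by rw [← hmod, hmm]⟩
        · rintro ⟨u, _, rfl⟩
          exact ⟨(u : ℤ), by simp [zpow_natCast]⟩
      have hfull : ∑ u ∈ Finset.range d, c ((p ^ u) r) = 0 := by
        have := hsum r
        rw [horbit, Finset.sum_image] at this
        · exact this
        · intro u hu v hv huv
          exact hinj u v (Finset.mem_range.mp hu) (Finset.mem_range.mp hv) huv
      have hwindow : ∀ s : ℕ, ∑ u ∈ Finset.range d, c ((p ^ (s + u)) r) = 0 := by
        intro s; induction s with
        | zero => simpa using hfull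
        | succ s ih =>
          have h1 : ∑ u ∈ Finset.range (d + 1), c ((p ^ (s + u)) r)
              = ∑ u ∈ Finset.range d, c ((p ^ (s + (u + 1))) r) + c ((p ^ (s + 0)) r) :=
            Finset.sum_range_succ' _ d
          have h2 : ∑ u ∈ Finset.range (d + 1), c ((p ^ (s + u)) r)
              = ∑ u ∈ Finset.range d, c ((p ^ (s + u)) r) + c ((p ^ (s + d)) r) :=
            Finset.sum_range_succ _ d
          have h3 : (p ^ (s + d)) r = (p ^ (s + 0)) r := by
            rw [pow_add, Equiv.Perm.mul_apply, hdr]; simp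
          have h4 : ∑ u ∈ Finset.range d, c ((p ^ (s + (u + 1))) r)
              = ∑ u ∈ Finset.range d, c ((p ^ (s + 1 + u)) r) := by
            apply Finset.sum_congr rfl
            intro u _
            rw [show s + (u + 1) = s + 1 + u from by omega]
          rw [h3] at h2
          have h5 := add_right_cancel (h1.symm.trans h2)
          rw [← h4, h5, ih]
      have hblocks' : ∀ q s : ℕ, ∑ u ∈ Finset.range (d * q), c ((p ^ (s + u)) r) = 0 := by
        intro q
        induction q with
        | zero => simp
        | succ q ih =>
          intro s
          have hsplit : d * (q + 1) = d * q + d := by ring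
          rw [hsplit, Finset.sum_range_add, ih s]
          have : ∑ u ∈ Finset.range d, c ((p ^ (s + (d * q + u))) r)
              = ∑ u ∈ Finset.range d, c ((p ^ ((s + d * q) + u)) r) := by
            apply Finset.sum_congr rfl; intro u _
            rw [show s + (d * q + u) = s + d * q + u from by omega]
          rw [this, hwindow (s + d * q), zero_add]
      have hblocks : ∀ e : ℕ, (p ^ e) r = r → ∀ s : ℕ,
          ∑ u ∈ Finset.range e, c ((p ^ (s + u)) r) = 0 := by
        intro e he s
        obtain ⟨q, rfl⟩ := hfix e he
        exact hblocks' q s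
      -- conclude
      obtain ⟨e, rfl⟩ : ∃ e, b = a + e := ⟨b - a, by omega⟩
      have hfe : (p ^ e) r = r := by
        apply (p ^ a).injective
        rw [← Equiv.Perm.mul_apply, ← pow_add, ← heq]
      have : S r (a + e) = S r a + ∑ u ∈ Finset.range e, c ((p ^ (a + u + 1)) r) := by
        simp only [hS]
        rw [Finset.sum_range_add]
      rw [this]
      have : ∑ u ∈ Finset.range e, c ((p ^ (a + u + 1)) r)
          = ∑ u ∈ Finset.range e, c ((p ^ ((a + 1) + u)) r) := by
        apply Finset.sum_congr rfl; intro u _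
        rw [show a + u + 1 = a + 1 + u from by omega]
      rw [this, hblocks e hfe (a + 1), add_zero]
    intro r a b heq
    rcases le_total a b with h | h
    · exact key r a b h heq
    · exact (key r b a h heq.symm).symm
  refine ⟨fun i => S (rep i) (m i), ?_, ?_⟩
  · have hm0 : m ν = 0 := by
      rw [hm]
      rw [Nat.find_eq_zero]
      simpa using hrep_nu
    simp [hm0, hS]
  · intro j
    have hrr : rep (p j) = rep j := by
      apply (hrep_const j (p j) ⟨1, by simp⟩).symm
    have h1 : (p ^ (m (p j))) (rep j) = p j := by rw [← hrr]; exact hmspec (p j)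
    have h2 : (p ^ (m j + 1)) (rep j) = p j := by
      rw [pow_succ', Equiv.Perm.mul_apply, hmspec j]
    have h3 : S (rep j) (m (p j)) = S (rep j) (m j + 1) :=
      hper (rep j) _ _ (h1.trans h2.symm)
    show S (rep (p j)) (m (p j)) - S (rep j) (m j) = c (p j)
    rw [hrr, h3]
    simp only [hS, Finset.sum_range_succ]
    rw [h2]
    ring

theorem perm_apply_inv_self {α : Type*} (f : Equiv.Perm α) (x : α) : f (f⁻¹ x) = x :=
  Equiv.Perm.eq_inv_iff_eq.mp rfl

end GSAux

open GS in
/-- If `t` fixes the last point, conjugates the permutation part of `x` to that of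
`y` (sending each cycle of `p` to the corresponding cycle of `q`), and the cycle sums match
(`cs_y (t i) = cs_x i` for all `i`), then there is `f` with `f ν = 0` such that
`z = (f; t) ∈ Z_k ≀ S_{n-1}` satisfies `y = z⁻¹ * x * z`. -/
theorem exists_conjugating_element (k n : ℕ) (hk : 1 ≤ k) (hn : 1 ≤ n)
    (x y : GS k n) (t : Equiv.Perm (Fin n))
    (ht : t (lastPt n hn) = lastPt n hn)
    (hconj : ∀ i : Fin n, y.2 (t i) = t (x.2 i))
    (hcs : ∀ i : Fin n, cycleSum y (t i) = cycleSum x i) :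
    ∃ f : Fin n → ZMod k, f (lastPt n hn) = 0 ∧
      GS.pair f t ∈ K k n hn ∧
      y = (GS.pair f t)⁻¹ * x * GS.pair f t := by
  classical
  set ν := lastPt n hn with hν
  have hq : y.2 = t * x.2 * t⁻¹ := by
    ext i
    have h := hconj (t⁻¹ i)
    rw [GSAux.perm_apply_inv_self] at h
    rw [h]; rfl
  have horb : ∀ i, orbitOf y.2 (t i) = (orbitOf x.2 i).image t := by
    intro i
    ext j
    simp only [orbitOf, Finset.mem_filter, Finset.mem_univ, true_and, Finset.mem_image]
    rw [hq, Equiv.Perm.sameCycle_conj]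
    constructor
    · intro hj
      exact ⟨t⁻¹ j, by simpa using hj, GSAux.perm_apply_inv_self t j⟩
    · rintro ⟨a, ha, rfl⟩
      simpa using ha
  have hsum : ∀ i : Fin n,
      ∑ j ∈ (Finset.univ.filter fun j => x.2.SameCycle i j), (y.1 (t j) - x.1 j) = 0 := by
    intro i
    rw [Finset.sum_sub_distrib]
    have h1 : ∑ j ∈ (Finset.univ.filter fun j => x.2.SameCycle i j), y.1 (t j)
        = cycleSum y (t i) := by
      rw [cycleSum, horb i, Finset.sum_image (fun a _ b _ h => t.injective h)]
      rfl
    have h2 : ∑ j ∈ (Finset.univ.filter fun j => x.2.SameCycle i j), x.1 j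
        = cycleSum x i := rfl
    rw [h1, h2, hcs i, sub_self]
  obtain ⟨F, hF0, hFrec⟩ := GSAux.exists_potential x.2 (fun j => y.1 (t j) - x.1 j) ν hsum
  set f : Fin n → ZMod k := fun i => F (t⁻¹ i) with hf
  have htinv : t⁻¹ ν = ν := by
    rw [Equiv.Perm.inv_eq_iff_eq, ht]
  have hfν : f ν = 0 := by rw [hf]; simp only; rw [htinv, hF0]
  refine ⟨f, hfν, ⟨ht, hfν⟩, ?_⟩
  have hft : ∀ j, f (t j) = F j := by
    intro j; rw [hf]; simp
  refine Prod.ext ?_ ?_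
  · funext i
    show y.1 i = (-f (t (x.2⁻¹ (t⁻¹ i))) + x.1 (t⁻¹ i)) + f i
    have hrec := hFrec (x.2⁻¹ (t⁻¹ i))
    rw [GSAux.perm_apply_inv_self] at hrec
    rw [GSAux.perm_apply_inv_self] at hrec
    rw [hft]
    show y.1 i = (-F (x.2⁻¹ (t⁻¹ i)) + x.1 (t⁻¹ i)) + F (t⁻¹ i)
    linear_combination -hrec
  · show y.2 = t * (x.2 * t⁻¹)
    rw [hq, mul_assoc]
end

section
/- Let n ≥ 1, let G = Z_2 ≀ S_n be the hyperoctahedral group and K = Z_2 ≀ S_{n−1} its subgroup. Then the pair (G × K, diag K) is symmetric: for every x ∈ G and every y ∈ K there exist a, b ∈ K such that x⁻¹ = a·x·b and y⁻¹ = a·y·b; equivalently, (x, y)⁻¹ lies in the double coset diag(K)·(x, y)·diag(K) inside G × K. -/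
open scoped Classical

/-!
For `c ∈ K` with `c⁻¹ z c = z⁻¹`, where `z = y⁻¹ x`, the elements `a = c⁻¹ y⁻¹` and `b = c y⁻¹`
do the job; so it suffices that every `z = (g; p)` is inverted by conjugation by some `c ∈ K`.
On each cycle of `p` fix a base point `r`, namely `ν` on the cycle of `ν`, and take
`c = (f; τ)`, where `τ (p^a r) = p^(-a) r` reflects the cycle about `r` and `f (p^a r)` is the
sum of `g` over the arc `p^(1-a) r, …, p^a r`. Going once around a cycle adds every value of `g`
twice, which is `0` in `ZMod 2`, so `f` is well defined; then `f (p i) = f i + g (p i) + g (τ i)`,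
which is exactly the equation `z c = c z⁻¹`.
-/

open Equiv Function Finset

theorem Function.Periodic.sum_range {A : Type*} [AddCommMonoid A] {u : ℕ → A} {L : ℕ}
    (hu : Periodic u L) (hsum : ∑ m ∈ range L, u m = 0) :
    Periodic (fun k => ∑ m ∈ range k, u m) L := by
  intro k
  induction k with
  | zero => simpa using hsum
  | succ k ih =>
    simp only at ih ⊢
    rw [Nat.add_right_comm, sum_range_succ, ih, hu, sum_range_succ]

namespace Equiv.Perm

variable {α : Type*} (p : Perm α)

theorem pow_apply_periodic (r : α) : Periodic (fun a : ℕ => (p ^ a) r) (minimalPeriod p r) := by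
  intro a
  simp only [coe_pow, iterate_add_minimalPeriod_eq]

theorem inv_pow_apply_periodic (r : α) :
    Periodic (fun a : ℕ => (p⁻¹ ^ a) r) (minimalPeriod p r) := by
  intro a
  have hL : (p⁻¹ ^ minimalPeriod p r) r = r := by
    rw [inv_pow, Perm.inv_eq_iff_eq, coe_pow, iterate_minimalPeriod]
  simp only [pow_add, mul_apply, hL]

theorem modEq_minimalPeriod_of_pow_apply_eq {r : α} {a b : ℕ} (h : (p ^ a) r = (p ^ b) r) :
    a ≡ b [MOD minimalPeriod p r] := by
  have hr : p ^ (-(b : ℤ) + a) • r = r := by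
    show (p ^ (-(b : ℤ) + a)) r = r
    rw [zpow_add, mul_apply, zpow_natCast, h, zpow_neg, zpow_natCast]
    exact Perm.inv_eq_iff_eq.mpr rfl
  refine Nat.ModEq.symm ((Nat.modEq_iff_dvd).mpr ?_)
  rw [← neg_add_eq_sub]
  exact MulAction.zpow_smul_eq_iff_minimalPeriod_dvd.mp hr

theorem _root_.Function.Periodic.eq_of_pow_apply_eq {β : Type*} {φ : ℕ → β} {r : α}
    (hφ : Periodic φ (minimalPeriod p r)) {a b : ℕ} (h : (p ^ a) r = (p ^ b) r) : φ a = φ b := by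
  rw [← hφ.map_mod_nat a, ← hφ.map_mod_nat b, p.modEq_minimalPeriod_of_pow_apply_eq h]

def symmArcSum {A : Type*} [AddCommMonoid A] (g : α → A) (r : α) (a : ℕ) : A :=
  ∑ m ∈ range a, (g ((p ^ (m + 1)) r) + g ((p⁻¹ ^ m) r))

theorem symmArcSum_periodic {A : Type*} [AddCommMonoid A] (hA : ∀ x : A, x + x = 0)
    (g : α → A) (r : α) : Periodic (p.symmArcSum g r) (minimalPeriod p r) := by
  refine Periodic.sum_range (fun m => ?_) ?_
  · simp only [add_right_comm m, (p.pow_apply_periodic r) (m + 1),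
      (p.inv_pow_apply_periodic r) m]
  · have hreflect : ∑ m ∈ range (minimalPeriod p r), g ((p⁻¹ ^ m) r)
        = ∑ m ∈ range (minimalPeriod p r), g ((p ^ (m + 1)) r) := by
      rw [← sum_range_reflect]
      refine sum_congr rfl fun m hm => congrArg g ?_
      have hm : minimalPeriod p r - 1 - m + (m + 1) = minimalPeriod p r := by
        have := mem_range.mp hm
        omega
      rw [inv_pow, Perm.inv_eq_iff_eq, ← mul_apply, ← pow_add, hm, coe_pow,
        iterate_minimalPeriod]
    rw [sum_add_distrib, hreflect, hA]

section CycleCoordinates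

variable (ν : α)

noncomputable def cycleRep (i : α) : α :=
  if p.SameCycle ν i then ν else @Classical.epsilon α ⟨i⟩ (p.SameCycle · i)

theorem sameCycle_cycleRep (i : α) : p.SameCycle (p.cycleRep ν i) i := by
  unfold cycleRep
  split_ifs with h
  · exact h
  · exact Classical.epsilon_spec (p := (p.SameCycle · i)) ⟨i, SameCycle.refl _ _⟩

theorem cycleRep_eq_of_sameCycle {i j : α} (h : p.SameCycle i j) :
    p.cycleRep ν i = p.cycleRep ν j := by
  have hij : ∀ x, p.SameCycle x i ↔ p.SameCycle x j := fun x => ⟨(·.trans h), (·.trans h.symm)⟩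
  simp only [cycleRep, hij]

theorem cycleRep_self : p.cycleRep ν ν = ν := if_pos (SameCycle.refl _ _)

theorem cycleRep_pow_apply_cycleRep (i : α) (a : ℕ) :
    p.cycleRep ν ((p ^ a) (p.cycleRep ν i)) = p.cycleRep ν i :=
  p.cycleRep_eq_of_sameCycle ν (sameCycle_pow_left.mpr (p.sameCycle_cycleRep ν i))

variable [Finite α]

-- Only determined modulo the length of the cycle, so `cycleLift φ` is meaningful for periodic `φ`.
noncomputable def cycleIndex (i : α) : ℕ := (p.sameCycle_cycleRep ν i).exists_nat_pow_eq.choose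

theorem pow_cycleIndex_apply (i : α) : (p ^ p.cycleIndex ν i) (p.cycleRep ν i) = i :=
  (p.sameCycle_cycleRep ν i).exists_nat_pow_eq.choose_spec

noncomputable def cycleLift {β : Type*} (φ : α → ℕ → β) (i : α) : β :=
  φ (p.cycleRep ν i) (p.cycleIndex ν i)

variable {p ν} {β : Type*} {φ : α → ℕ → β}

theorem cycleLift_pow_apply_cycleRep (hφ : ∀ r, Periodic (φ r) (minimalPeriod p r))
    (i : α) (a : ℕ) :
    p.cycleLift ν φ ((p ^ a) (p.cycleRep ν i)) = φ (p.cycleRep ν i) a := by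
  have hidx := p.pow_cycleIndex_apply ν ((p ^ a) (p.cycleRep ν i))
  rw [cycleRep_pow_apply_cycleRep] at hidx
  rw [cycleLift, cycleRep_pow_apply_cycleRep]
  exact (hφ _).eq_of_pow_apply_eq p hidx

theorem cycleLift_cycleRep (hφ : ∀ r, Periodic (φ r) (minimalPeriod p r)) (i : α) :
    p.cycleLift ν φ (p.cycleRep ν i) = φ (p.cycleRep ν i) 0 := by
  simpa using cycleLift_pow_apply_cycleRep hφ i 0

theorem cycleLift_self (hφ : ∀ r, Periodic (φ r) (minimalPeriod p r)) :
    p.cycleLift ν φ ν = φ ν 0 := by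
  have h := cycleLift_cycleRep (ν := ν) hφ ν
  rwa [cycleRep_self] at h

theorem cycleLift_perm_apply (hφ : ∀ r, Periodic (φ r) (minimalPeriod p r)) (i : α) :
    p.cycleLift ν φ (p i) = φ (p.cycleRep ν i) (p.cycleIndex ν i + 1) := by
  conv_lhs => rw [← p.pow_cycleIndex_apply ν i, ← mul_apply, ← pow_succ']
  exact cycleLift_pow_apply_cycleRep hφ i _

variable (p ν)

noncomputable def cycleReflection : α → α := p.cycleLift ν fun r a => (p⁻¹ ^ a) r

theorem cycleReflection_perm_apply (i : α) :
    p.cycleReflection ν (p i) = p⁻¹ (p.cycleReflection ν i) := by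
  rw [cycleReflection, cycleLift_perm_apply p.inv_pow_apply_periodic, pow_succ', mul_apply]
  rfl

theorem cycleReflection_perm_inv_apply (i : α) :
    p.cycleReflection ν (p⁻¹ i) = p (p.cycleReflection ν i) := by
  have h := p.cycleReflection_perm_apply ν (p⁻¹ i)
  rw [coe_inv, apply_symm_apply] at h
  rw [h, coe_inv, apply_symm_apply]

theorem cycleReflection_involutive : Involutive (p.cycleReflection ν) := by
  intro i
  have hsemiconj : Semiconj (p.cycleReflection ν) ⇑p⁻¹ p := p.cycleReflection_perm_inv_apply ν
  have hrep : p.cycleReflection ν (p.cycleRep ν i) = p.cycleRep ν i := by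
    rw [cycleReflection, cycleLift_cycleRep p.inv_pow_apply_periodic, pow_zero, one_apply]
  conv_rhs => rw [← p.pow_cycleIndex_apply ν i]
  show p.cycleReflection ν ((p⁻¹ ^ p.cycleIndex ν i) (p.cycleRep ν i)) = _
  rw [coe_pow, (hsemiconj.iterate_right _).eq, hrep, coe_pow]

theorem cycleReflection_self : p.cycleReflection ν ν = ν := by
  rw [cycleReflection, cycleLift_self p.inv_pow_apply_periodic, pow_zero, one_apply]

variable {A : Type*} [AddCommMonoid A]

noncomputable def cyclePotential (g : α → A) : α → A := p.cycleLift ν (p.symmArcSum g)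

theorem cyclePotential_perm_apply (hA : ∀ x : A, x + x = 0) (g : α → A) (i : α) :
    p.cyclePotential ν g (p i)
      = p.cyclePotential ν g i + (g (p i) + g (p.cycleReflection ν i)) := by
  rw [cyclePotential, cycleLift_perm_apply (p.symmArcSum_periodic hA g), symmArcSum,
    sum_range_succ, pow_succ', mul_apply, pow_cycleIndex_apply]
  rfl

theorem cyclePotential_self (hA : ∀ x : A, x + x = 0) (g : α → A) :
    p.cyclePotential ν g ν = 0 := by
  rw [cyclePotential, cycleLift_self (p.symmArcSum_periodic hA g), symmArcSum, sum_range_zero]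

end CycleCoordinates

end Equiv.Perm

namespace GS

theorem exists_mem_K_mul_eq_mul_inv {n : ℕ} (hn : 1 ≤ n) (z : GS 2 n) :
    ∃ c ∈ K 2 n hn, z * c = c * z⁻¹ := by
  obtain ⟨g, p⟩ := z
  set ν := lastPt n hn
  have hA : ∀ x : ZMod 2, x + x = 0 := CharTwo.add_self_eq_zero
  let τ : Equiv.Perm (Fin n) := (p.cycleReflection_involutive ν).toPerm
  refine ⟨(p.cyclePotential ν g, τ), ⟨p.cycleReflection_self ν, p.cyclePotential_self ν hA g⟩,
    Prod.ext (funext fun i => ?_) (Equiv.ext fun i => ?_)⟩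
  · show g (τ⁻¹ i) + p.cyclePotential ν g i = p.cyclePotential ν g (p i) + -g (p i)
    rw [p.cyclePotential_perm_apply ν hA]
    show g (p.cycleReflection ν i) + _ = _
    ring
  · exact p.cycleReflection_perm_apply ν i

end GS

open GS in
/-- The pair `(G × K, diag K)` with `G = Z_2 ≀ S_n`, `K = Z_2 ≀ S_{n-1}` is
symmetric: for every `x ∈ G` and `y ∈ K` there are `a, b ∈ K` with `x⁻¹ = a * x * b` and
`y⁻¹ = a * y * b`. -/
theorem hyperoctahedral_symmetric_pair (n : ℕ) (hn : 1 ≤ n)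
    (x y : GS 2 n) (hy : y ∈ K 2 n hn) :
    ∃ a ∈ K 2 n hn, ∃ b ∈ K 2 n hn, x⁻¹ = a * x * b ∧ y⁻¹ = a * y * b := by
  obtain ⟨c, hc, hcx⟩ := exists_mem_K_mul_eq_mul_inv hn (y⁻¹ * x)
  refine ⟨c⁻¹ * y⁻¹, mul_mem (inv_mem hc) (inv_mem hy), c * y⁻¹, mul_mem hc (inv_mem hy), ?_,
    by group⟩
  calc x⁻¹ = c⁻¹ * (c * (y⁻¹ * x)⁻¹) * y⁻¹ := by group
    _ = c⁻¹ * y⁻¹ * x * (c * y⁻¹) := by rw [← hcx]; group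
end

section
/- Let n ≥ 1, k ≥ 1, let G = Z_k ≀ S_n and K = Z_k ≀ S_{n−1} its subgroup. Let f₁, f₂ : G → ℂ be functions that are constant on K-conjugacy classes, i.e., f_i(z·x·z⁻¹) = f_i(x) for all x ∈ G and z ∈ K. Then their convolution commutes: for every g ∈ G, ∑_{h ∈ G} f₁(g·h⁻¹)·f₂(h) = ∑_{h ∈ G} f₂(g·h⁻¹)·f₁(h). In other words, the algebra C(G, K) of K-conjugation-invariant complex-valued functions on G under convolution is commutative. -/
open scoped Classical

section Aux
variable {k n : ℕ}

/-- helper: zpow application splits -/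
lemma zpow_apply_add (p : Equiv.Perm (Fin n)) (c d : ℤ) (a : Fin n) :
    (p ^ (c + d)) a = (p ^ c) ((p ^ d) a) := by
  rw [zpow_add]; rfl

noncomputable def Pfun (g : Fin n → ZMod k) (p : Equiv.Perm (Fin n)) (a : Fin n) (j : ℤ) :
    ZMod k :=
  (∑ l ∈ Finset.range j.toNat, g ((p ^ ((l : ℤ) + 1)) a))
    - ∑ l ∈ Finset.range (-j).toNat, g ((p ^ (-(l : ℤ))) a)

lemma Pfun_zero (g : Fin n → ZMod k) (p : Equiv.Perm (Fin n)) (a : Fin n) :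
    Pfun g p a 0 = 0 := by simp [Pfun]

lemma Pfun_succ (g : Fin n → ZMod k) (p : Equiv.Perm (Fin n)) (a : Fin n) (j : ℤ) :
    Pfun g p a (j + 1) = Pfun g p a j + g ((p ^ (j + 1)) a) := by
  rcases le_or_gt 0 j with hj | hj
  · have h1 : (j + 1).toNat = j.toNat + 1 := by omega
    have h2 : (-(j + 1)).toNat = 0 := by omega
    have h3 : (-j).toNat = 0 := by omega
    have h4 : ((j.toNat : ℤ)) = j := Int.toNat_of_nonneg hj
    simp only [Pfun, h1, h2, h3, Finset.sum_range_succ, Finset.range_zero,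
      Finset.sum_empty, h4, sub_zero]
  · have h1 : (j + 1).toNat = 0 := by omega
    have h2 : j.toNat = 0 := by omega
    have h3 : (-j).toNat = (-(j+1)).toNat + 1 := by omega
    have h4 : ((((-(j+1)).toNat : ℤ))) = -(j+1) := Int.toNat_of_nonneg (by omega)
    simp only [Pfun, h1, h2, h3, Finset.sum_range_succ, Finset.range_zero,
      Finset.sum_empty]
    rw [h4]
    have : -(-(j+1)) = j + 1 := by ring
    rw [this]
    ring

lemma Pfun_add (g : Fin n → ZMod k) (p : Equiv.Perm (Fin n)) (a : Fin n) (c : ℤ)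
    (hc : (p ^ c) a = a) (j : ℤ) : Pfun g p a (j + c) = Pfun g p a j + Pfun g p a c := by
  induction j using Int.induction_on with
  | zero => rw [zero_add, Pfun_zero, zero_add]
  | succ m ih =>
      have e1 : (m : ℤ) + 1 + c = (m + c) + 1 := by ring
      have e2 : ((m : ℤ) + c + 1) = ((m : ℤ) + 1) + c := by ring
      have e3 : (p ^ ((m : ℤ) + c + 1)) a = (p ^ ((m : ℤ) + 1)) a := by
        have : ((m : ℤ) + c + 1) = ((m : ℤ) + 1) + c := by ring
        rw [this, zpow_apply_add, hc]
      rw [e1, Pfun_succ, ih, Pfun_succ, e3]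
      ring
  | pred m ih =>
      have e1 : (-(m : ℤ) - 1 + c) + 1 = -(m : ℤ) + c := by ring
      have key := Pfun_succ g p a (-(m : ℤ) - 1 + c)
      rw [e1] at key
      have key2 := Pfun_succ g p a (-(m : ℤ) - 1)
      have e2 : (-(m : ℤ) - 1) + 1 = -(m : ℤ) := by ring
      rw [e2] at key2
      have e3 : (p ^ (-(m : ℤ) - 1 + c + 1)) a = (p ^ (-(m : ℤ) - 1 + 1)) a := by
        have h : (-(m : ℤ) - 1 + c + 1) = (-(m : ℤ) - 1 + 1) + c := by ring
        rw [h, zpow_apply_add, hc]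
      rw [e1, e2] at e3
      -- key : Pfun (-m + c) = Pfun (-m-1+c) + g (p^(-m) a)
      -- ih : Pfun (-m + c) = Pfun (-m) + Pfun c
      -- key2 : Pfun (-m) = Pfun (-m-1) + g (p^(-m) a)
      have := key.symm.trans ih
      rw [key2] at this
      -- this : Pfun (-m-1+c) + g(p^(-m+c) a) = Pfun (-m-1) + g(p^(-m) a) + Pfun c
      rw [e3] at this
      linear_combination this

noncomputable def Sfun (g : Fin n → ZMod k) (p : Equiv.Perm (Fin n)) (a : Fin n) (j : ℤ) :
    ZMod k := Pfun g p a j + Pfun g p a (-j)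

lemma Sfun_zero (g : Fin n → ZMod k) (p : Equiv.Perm (Fin n)) (a : Fin n) :
    Sfun g p a 0 = 0 := by simp [Sfun, Pfun_zero]

lemma Sfun_succ (g : Fin n → ZMod k) (p : Equiv.Perm (Fin n)) (a : Fin n) (j : ℤ) :
    Sfun g p a (j + 1) = Sfun g p a j + g ((p ^ (j + 1)) a) - g ((p ^ (-j)) a) := by
  have h1 := Pfun_succ g p a j
  have h2 := Pfun_succ g p a (-j - 1)
  have e2 : (-j - 1) + 1 = -j := by ring
  rw [e2] at h2
  have e3 : -(j + 1) = -j - 1 := by ring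
  unfold Sfun
  rw [h1, e3]
  linear_combination -h2

lemma Sfun_period (g : Fin n → ZMod k) (p : Equiv.Perm (Fin n)) (a : Fin n) (c : ℤ)
    (hc : (p ^ c) a = a) (j : ℤ) : Sfun g p a (j + c) = Sfun g p a j := by
  have hc' : (p ^ (-c)) a = a := by
    have := congrArg (fun b => (p ^ (-c)) b) hc
    simpa [← zpow_apply_add] using this.symm
  unfold Sfun
  rw [Pfun_add g p a c hc j, neg_add, Pfun_add g p a (-c) hc' (-j)]
  have : Pfun g p a c + Pfun g p a (-c) = 0 := by
    have := Pfun_add g p a c hc (-c)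
    rw [neg_add_cancel, Pfun_zero] at this
    linear_combination -this
  linear_combination this
end Aux


section Dev

open GS

variable {k n : ℕ}

/-- The anti-automorphism `τ(g; p) = (g ∘ p; p⁻¹)`. -/
def tau (x : GS k n) : GS k n := (fun i => x.1 (x.2 i), x.2⁻¹)

lemma tau_tau : Function.Involutive (tau : GS k n → GS k n) := by
  intro x
  refine Prod.ext ?_ (inv_inv x.2)
  funext i
  show x.1 (x.2 (x.2⁻¹ i)) = x.1 i
  rw [← Equiv.Perm.mul_apply, mul_inv_cancel, Equiv.Perm.one_apply]

lemma tau_mul (x y : GS k n) : tau (x * y) = tau y * tau x := by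
  refine Prod.ext ?_ (mul_inv_rev y.2 x.2)
  funext i
  show x.1 (y.2⁻¹ ((y.2 * x.2) i)) + y.1 ((y.2 * x.2) i)
      = y.1 (y.2 ((x.2⁻¹)⁻¹ i)) + x.1 (x.2 i)
  rw [Equiv.Perm.mul_apply, ← Equiv.Perm.mul_apply y.2⁻¹, inv_mul_cancel, Equiv.Perm.one_apply, inv_inv, add_comm]

lemma tau_inv (x : GS k n) : tau x⁻¹ = (tau x)⁻¹ := rfl

lemma exists_conj (hn : 1 ≤ n) (x : GS k n) :
    ∃ z ∈ K k n hn, z * x * z⁻¹ = tau x := by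
  classical
  obtain ⟨g, p⟩ := x
  set ν := lastPt n hn with hν
  have hmem : ∀ i : Fin n, i ∈ orbitOf p i := fun i => by
    simp [orbitOf, Equiv.Perm.SameCycle.refl]
  have horb : ∀ i j : Fin n, p.SameCycle i j → orbitOf p i = orbitOf p j := by
    intro i j h
    ext m
    simp only [orbitOf, Finset.mem_filter, Finset.mem_univ, true_and]
    exact ⟨fun h' => h.symm.trans h', fun h' => h.trans h'⟩
  set a : Fin n → Fin n := fun i =>
    if p.SameCycle ν i then ν else (orbitOf p i).min' ⟨i, hmem i⟩ with ha
  have ha_same : ∀ i, p.SameCycle (a i) i := by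
    intro i
    by_cases h : p.SameCycle ν i
    · simpa [ha, h] using h
    · have hm : (orbitOf p i).min' ⟨i, hmem i⟩ ∈ orbitOf p i := Finset.min'_mem _ _
      simp only [orbitOf, Finset.mem_filter] at hm
      simp only [ha, if_neg h]
      exact hm.2.symm
  have ha_congr : ∀ i j, p.SameCycle i j → a i = a j := by
    intro i j h
    simp only [ha]
    by_cases h' : p.SameCycle ν i
    · rw [if_pos h', if_pos (h'.trans h)]
    · rw [if_neg h', if_neg fun hj => h' (hj.trans h.symm)]
      have horbij := horb i j h
      simp only [horbij]
  have hsc : ∀ i, ∃ c : ℤ, (p ^ c) (a i) = i := fun i => ha_same i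
  set e : Fin n → ℤ := fun i => (hsc i).choose with he_def
  have he : ∀ i, (p ^ (e i)) (a i) = i := fun i => (hsc i).choose_spec
  -- two exponents hitting the same point differ by a stabilizer element
  have hfix : ∀ (i : Fin n) (c d : ℤ), (p ^ c) (a i) = i → (p ^ d) (a i) = i →
      (p ^ (c - d)) (a i) = a i := by
    intro i c d hc hd
    have hr : c - d = -d + c := by ring
    have h2 : (p ^ (-d)) i = a i := by
      conv_lhs => rw [← hd, ← zpow_apply_add]
      rw [neg_add_cancel]
      simp
    rw [hr, zpow_apply_add, hc]
    exact h2
  set t0 : Fin n → Fin n := fun i => (p ^ (-(e i))) (a i) with ht0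
  have ht0_spec : ∀ (i : Fin n) (d : ℤ), (p ^ d) (a i) = i → t0 i = (p ^ (-d)) (a i) := by
    intro i d hd
    have h1 : (p ^ (e i - d)) (a i) = a i := hfix i (e i) d (he i) hd
    show (p ^ (-(e i))) (a i) = (p ^ (-d)) (a i)
    calc (p ^ (-(e i))) (a i) = (p ^ (-(e i))) ((p ^ (e i - d)) (a i)) := by rw [h1]
      _ = (p ^ (-d)) (a i) := by
          rw [← zpow_apply_add]
          have : -(e i) + (e i - d) = -d := by ring
          rw [this]
  have hsame_t0 : ∀ i, p.SameCycle i (t0 i) :=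
    fun i => (ha_same i).symm.trans ⟨-(e i), rfl⟩
  have hat : ∀ i, a (t0 i) = a i := fun i => (ha_congr i (t0 i) (hsame_t0 i)).symm
  have hinv : Function.Involutive t0 := by
    intro i
    have hd : (p ^ (-(e i))) (a (t0 i)) = t0 i := by rw [hat]
    have h2 := ht0_spec (t0 i) (-(e i)) hd
    rw [h2, hat, neg_neg]
    exact he i
  set t : Equiv.Perm (Fin n) := ⟨t0, t0, hinv.leftInverse, hinv.rightInverse⟩ with ht
  have htapp : ∀ i, t i = t0 i := fun _ => rfl
  have htinv : ∀ i, t⁻¹ i = t0 i := fun _ => rfl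
  set f : Fin n → ZMod k := fun i => Sfun g p (a i) (e i) with hf
  have hfspec : ∀ (i : Fin n) (d : ℤ), (p ^ d) (a i) = i → f i = Sfun g p (a i) d := by
    intro i d hd
    have h1 : (p ^ (e i - d)) (a i) = a i := hfix i (e i) d (he i) hd
    show Sfun g p (a i) (e i) = Sfun g p (a i) d
    have := Sfun_period g p (a i) (e i - d) h1 d
    have hr : d + (e i - d) = e i := by ring
    rw [hr] at this
    exact this
  -- membership facts
  have haν : a ν = ν := by
    simp only [ha]
    rw [if_pos (Equiv.Perm.SameCycle.refl p ν)]
  have hpν : (p ^ (0 : ℤ)) (a ν) = ν := by rw [haν]; simp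
  have htν : t0 ν = ν := by
    rw [ht0_spec ν 0 hpν, haν]
    simp
  have hfν : f ν = 0 := by
    rw [hfspec ν 0 hpν, Sfun_zero]
  refine ⟨(f, t), ⟨htν, hfν⟩, ?_⟩
  refine Prod.ext ?_ ?_
  · -- function part
    show (fun i => (fun i' => f (p⁻¹ i') + g i') ((t⁻¹)⁻¹ i) + -(f (t i))) =
      fun i => g (p i)
    funext i
    have hii : (t⁻¹)⁻¹ i = t0 i := by rw [inv_inv]; exact htapp i
    simp only [hii, htapp]
    -- goal : f (p⁻¹ (t0 i)) + g (t0 i) + -(f (t0 i)) = g (p i)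
    have hfti : f (t0 i) = Sfun g p (a i) (-(e i)) := by
      have hd : (p ^ (-(e i))) (a (t0 i)) = t0 i := by rw [hat]
      rw [hfspec (t0 i) (-(e i)) hd, hat]
    have hj' : p⁻¹ (t0 i) = (p ^ ((-1 : ℤ) + -(e i))) (a i) := by
      rw [zpow_apply_add]
      show p⁻¹ (t0 i) = (p ^ (-1 : ℤ)) (t0 i)
      rw [zpow_neg_one]
    have hsame' : p.SameCycle i (p⁻¹ (t0 i)) :=
      (ha_same i).symm.trans ⟨(-1 : ℤ) + -(e i), hj'.symm⟩
    have hat' : a (p⁻¹ (t0 i)) = a i := (ha_congr i _ hsame').symm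
    have hfj' : f (p⁻¹ (t0 i)) = Sfun g p (a i) ((-1 : ℤ) + -(e i)) := by
      have hd : (p ^ ((-1 : ℤ) + -(e i))) (a (p⁻¹ (t0 i))) = p⁻¹ (t0 i) := by
        rw [hat']; exact hj'.symm
      rw [hfspec (p⁻¹ (t0 i)) _ hd, hat']
    have hgpi : g (p i) = g ((p ^ ((1 : ℤ) + e i)) (a i)) := by
      rw [zpow_apply_add, he i, zpow_one]
    have hstep := Sfun_succ g p (a i) ((-1 : ℤ) + -(e i))
    have hr1 : ((-1 : ℤ) + -(e i)) + 1 = -(e i) := by ring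
    have hr2 : -((-1 : ℤ) + -(e i)) = 1 + e i := by ring
    rw [hr1, hr2] at hstep
    rw [hfti, hfj', hgpi]
    -- hstep : Sfun (-e) = Sfun (-1 + -e) + g (p^(-e) a) - g (p^(1+e) a)
    have hgt0 : g (t0 i) = g ((p ^ (-(e i))) (a i)) := rfl
    rw [hgt0]
    linear_combination -hstep
  · -- permutation part
    show t⁻¹ * (p * t) = p⁻¹
    ext i
    rw [Equiv.Perm.mul_apply, Equiv.Perm.mul_apply, htapp, htinv]
    -- goal : t0 (p (t0 i)) = p⁻¹ i
    have hc : (p ^ ((1 : ℤ) + -(e i))) (a i) = p (t0 i) := by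
      rw [zpow_apply_add, zpow_one]
    have hsame' : p.SameCycle i (p (t0 i)) :=
      (ha_same i).symm.trans ⟨(1 : ℤ) + -(e i), hc⟩
    have hat' : a (p (t0 i)) = a i := (ha_congr i _ hsame').symm
    have hd : (p ^ ((1 : ℤ) + -(e i))) (a (p (t0 i))) = p (t0 i) := by rw [hat']; exact hc
    rw [ht0_spec (p (t0 i)) _ hd, hat']
    have hr : -((1 : ℤ) + -(e i)) = (-1 : ℤ) + e i := by ring
    rw [hr, zpow_apply_add, he i, zpow_neg_one]

end Dev



open GS in
/-- The convolution algebra of functions on `G = Z_k ≀ S_n` that are constant on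
`K = Z_k ≀ S_{n-1}`-conjugacy classes is commutative. -/
theorem K_conj_invariant_convolution_comm (k n : ℕ) (hk : 1 ≤ k) (hn : 1 ≤ n)
    (f₁ f₂ : GS k n → ℂ)
    (h₁ : ∀ x : GS k n, ∀ z ∈ K k n hn, f₁ (z * x * z⁻¹) = f₁ x)
    (h₂ : ∀ x : GS k n, ∀ z ∈ K k n hn, f₂ (z * x * z⁻¹) = f₂ x)
    (g : GS k n) :
    ∑ᶠ h : GS k n, f₁ (g * h⁻¹) * f₂ h = ∑ᶠ h : GS k n, f₂ (g * h⁻¹) * f₁ h := by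
  classical
  obtain ⟨z, hzK, hz⟩ := exists_conj hn g
  have hinv1 : ∀ y : GS k n, f₁ (tau y) = f₁ y := by
    intro y
    obtain ⟨w, hwK, hw⟩ := exists_conj hn y
    rw [← hw]
    exact h₁ y w hwK
  have hinv2 : ∀ y : GS k n, f₂ (tau y) = f₂ y := by
    intro y
    obtain ⟨w, hwK, hw⟩ := exists_conj hn y
    rw [← hw]
    exact h₂ y w hwK
  let τe : Equiv.Perm (GS k n) := Function.Involutive.toPerm tau tau_tau
  let ψ : Equiv.Perm (GS k n) :=
    (Equiv.inv (GS k n)).trans ((Equiv.mulLeft g).trans (τe.trans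
      ((Equiv.mulLeft z⁻¹).trans (Equiv.mulRight z))))
  have hψ : ∀ h : GS k n, ψ h = z⁻¹ * tau (g * h⁻¹) * z := fun h => rfl
  have key : ∀ h : GS k n, f₁ (g * h⁻¹) * f₂ h = f₂ (g * (ψ h)⁻¹) * f₁ (ψ h) := by
    intro h
    have h1 : f₁ (ψ h) = f₁ (g * h⁻¹) := by
      rw [hψ]
      have : z⁻¹ * tau (g * h⁻¹) * z = z⁻¹ * tau (g * h⁻¹) * (z⁻¹)⁻¹ := by rw [inv_inv]
      rw [this, h₁ (tau (g * h⁻¹)) z⁻¹ (inv_mem hzK), hinv1]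
    have h2 : g * (ψ h)⁻¹ = z⁻¹ * tau h * z := by
      rw [hψ, tau_mul, tau_inv, ← hz]
      group
    have h3 : f₂ (g * (ψ h)⁻¹) = f₂ h := by
      rw [h2]
      have : z⁻¹ * tau h * z = z⁻¹ * tau h * (z⁻¹)⁻¹ := by rw [inv_inv]
      rw [this, h₂ (tau h) z⁻¹ (inv_mem hzK), hinv2]
    rw [h1, h3, mul_comm]
  calc ∑ᶠ h : GS k n, f₁ (g * h⁻¹) * f₂ h
      = ∑ᶠ h : GS k n, f₂ (g * (ψ h)⁻¹) * f₁ (ψ h) := finsum_congr key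
    _ = ∑ᶠ h : GS k n, f₂ (g * h⁻¹) * f₁ h :=
        finsum_comp_equiv ψ (f := fun h => f₂ (g * h⁻¹) * f₁ h)
end

section
/- Let n ≥ 1, k ≥ 1, let G = Z_k ≀ S_n, let K = Z_k ≀ S_{n−1} be its subgroup, and let diag K = {(z, z) : z ∈ K} ≤ G × K. Let F₁, F₂ : G × K → ℂ be functions that are constant on diag(K)-double cosets, i.e., F_i((a, a)·w·(b, b)) = F_i(w) for all w ∈ G × K and a, b ∈ K. Then F₁ ⋆ F₂ = F₂ ⋆ F₁, where ⋆ is convolution on the finite group G × K. In other words, (G × K, diag K) is a Gelfand pair. -/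
open scoped Classical

namespace GS

variable {k n : ℕ}

theorem mem_K {hn : 1 ≤ n} {x : GS k n} :
    x ∈ K k n hn ↔ x.2 (lastPt n hn) = lastPt n hn ∧ x.1 (lastPt n hn) = 0 := Iff.rfl

/-- The anti-automorphism `σ(f,p) = (f ∘ p, p⁻¹)`. -/
def sgm (x : GS k n) : GS k n := (fun i => x.1 (x.2 i), x.2⁻¹)

theorem sgm_mul (x y : GS k n) : sgm (x * y) = sgm y * sgm x := by
  refine Prod.ext ?_ ?_
  · funext i
    show x.1 (y.2⁻¹ ((y.2 * x.2) i)) + y.1 ((y.2 * x.2) i)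
        = y.1 (y.2 ((x.2⁻¹)⁻¹ i)) + x.1 (x.2 i)
    simp [Equiv.Perm.mul_apply, add_comm]
  · show (y.2 * x.2)⁻¹ = x.2⁻¹ * y.2⁻¹
    rw [mul_inv_rev]

theorem sgm_sgm (x : GS k n) : sgm (sgm x) = x := by
  refine Prod.ext ?_ ?_
  · funext i
    show x.1 (x.2 (x.2⁻¹ i)) = x.1 i
    simp
  · show (x.2⁻¹)⁻¹ = x.2
    rw [inv_inv]

theorem sgm_one : sgm (1 : GS k n) = 1 := rfl

theorem sgm_mem_K (hn : 1 ≤ n) {x : GS k n} (hx : x ∈ K k n hn) : sgm x ∈ K k n hn := by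
  obtain ⟨h1, h2⟩ := mem_K.1 hx
  refine mem_K.2 ⟨?_, ?_⟩
  · show x.2⁻¹ (lastPt n hn) = lastPt n hn
    rw [Equiv.Perm.inv_eq_iff_eq, h1]
  · show x.1 (x.2 (lastPt n hn)) = 0
    rw [h1, h2]

theorem zp (p : Equiv.Perm (Fin n)) (a b : ℤ) (x : Fin n) :
    (p ^ a) ((p ^ b) x) = (p ^ (a + b)) x := by
  rw [zpow_add, Equiv.Perm.mul_apply]

theorem move2 (p : Equiv.Perm (Fin n)) (x : Fin n) (a b a' b' : ℤ)
    (h : (p ^ a) x = (p ^ b) x) (hc : a - b = a' - b' ∨ a - b = b' - a') :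
    (p ^ a') x = (p ^ b') x := by
  have hfix : (p ^ (a - b)) x = x := by
    have h1 : (p ^ (-b)) ((p ^ a) x) = (p ^ (-b)) ((p ^ b) x) := by rw [h]
    rw [zp, zp, show -b + b = 0 by ring, zpow_zero] at h1
    rw [show a - b = -b + a by ring]
    simpa using h1
  have hfix' : (p ^ (b - a)) x = x := by
    have h1 : (p ^ (b - a)) ((p ^ (a - b)) x) = (p ^ (b - a)) x := by rw [hfix]
    rw [zp, show b - a + (a - b) = 0 by ring, zpow_zero] at h1
    simpa using h1.symm
  rcases hc with hc | hc
  · have h1 : (p ^ b') ((p ^ (a - b)) x) = (p ^ b') x := by rw [hfix]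
    rw [zp, show b' + (a - b) = a' by omega] at h1
    exact h1
  · have h1 : (p ^ b') ((p ^ (b - a)) x) = (p ^ b') x := by rw [hfix']
    rw [zp, show b' + (b - a) = a' by omega] at h1
    exact h1

theorem Tr (p : Equiv.Perm (Fin n)) (f : Fin n → ZMod k) (L : ℕ) (x : Fin n)
    (hx : (p ^ (L : ℤ)) x = x) (c d : ℤ) :
    (∑ v ∈ Finset.range L, f ((p ^ (c + (v : ℤ))) x))
      = ∑ v ∈ Finset.range L, f ((p ^ (d + (v : ℤ))) x) := by
  have step : ∀ c : ℤ, (∑ v ∈ Finset.range L, f ((p ^ (c + (v : ℤ))) x))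
      = ∑ v ∈ Finset.range L, f ((p ^ ((c + 1) + (v : ℤ))) x) := by
    intro c
    set g : ℕ → ZMod k := fun v => f ((p ^ (c + (v : ℤ))) x) with hg
    have h1 : ∑ v ∈ Finset.range L, f ((p ^ ((c + 1) + (v : ℤ))) x)
        = ∑ v ∈ Finset.range L, g (v + 1) := by
      refine Finset.sum_congr rfl fun v _ => ?_
      rw [hg]
      rw [show (c + 1 + (v : ℤ)) = (c + ((v + 1 : ℕ) : ℤ)) by push_cast; ring]
    have h2 := Finset.sum_range_succ' g L
    have h3 := Finset.sum_range_succ g L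
    have h4 : g L = g 0 := by
      rw [hg]
      simp only []
      congr 1
      rw [← zp p c (L : ℤ) x, hx]
      norm_num
    rw [h1]
    rw [h3] at h2
    linear_combination h2 - h4
  have up : ∀ (t : ℕ) (c : ℤ), (∑ v ∈ Finset.range L, f ((p ^ (c + (v : ℤ))) x))
      = ∑ v ∈ Finset.range L, f ((p ^ ((c + (t : ℤ)) + (v : ℤ))) x) := by
    intro t
    induction t with
    | zero => intro c; simp
    | succ t ih =>
      intro c
      rw [step c, ih (c + 1)]
      refine Finset.sum_congr rfl fun v _ => ?_
      congr 2
      push_cast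
      ring_nf
  rcases le_total c d with h | h
  · obtain ⟨t, ht⟩ := Int.le.dest h
    rw [← ht]
    exact up t c
  · obtain ⟨t, ht⟩ := Int.le.dest h
    rw [← ht]
    exact (up t d).symm

/-- Potential sums along a cycle. -/
def Hs (p : Equiv.Perm (Fin n)) (f : Fin n → ZMod k) (x : Fin n) (m : ℕ) : ZMod k :=
  ∑ u ∈ Finset.range m, (f ((p ^ (-(u : ℤ))) x) - f ((p ^ ((u : ℤ) + 1)) x))

theorem Weq (p : Equiv.Perm (Fin n)) (f : Fin n → ZMod k) {x : Fin n} {a b : ℕ}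
    (h : (p ^ a) x = (p ^ b) x) : Hs p f x a = Hs p f x b := by
  have main : ∀ (x : Fin n) (b L : ℕ), (p ^ (L : ℤ)) x = x → Hs p f x (b + L) = Hs p f x b := by
    intro x b L hx
    have hadd := Finset.sum_range_add
      (fun u : ℕ => f ((p ^ (-(u : ℤ))) x) - f ((p ^ ((u : ℤ) + 1)) x)) b L
    have hz : (∑ v ∈ Finset.range L,
        (f ((p ^ (-((b + v : ℕ) : ℤ))) x) - f ((p ^ (((b + v : ℕ) : ℤ) + 1)) x))) = 0 := by
      rw [Finset.sum_sub_distrib]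
      have e1 : (∑ v ∈ Finset.range L, f ((p ^ (-((b + v : ℕ) : ℤ))) x))
          = ∑ v ∈ Finset.range L, f ((p ^ ((1 - (b : ℤ) - (L : ℤ)) + (v : ℤ))) x) := by
        rw [← Finset.sum_range_reflect (fun j : ℕ => f ((p ^ (-((b + j : ℕ) : ℤ))) x)) L]
        refine Finset.sum_congr rfl fun j hj => ?_
        have hjL : j < L := Finset.mem_range.1 hj
        congr 2
        have : ((L - 1 - j : ℕ) : ℤ) = (L : ℤ) - 1 - (j : ℤ) := by omega
        push_cast [this]
        ring_nf
      have e2 : (∑ v ∈ Finset.range L, f ((p ^ (((b + v : ℕ) : ℤ) + 1)) x))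
          = ∑ v ∈ Finset.range L, f ((p ^ (((b : ℤ) + 1) + (v : ℤ))) x) := by
        refine Finset.sum_congr rfl fun v _ => ?_
        congr 2
        push_cast
        ring_nf
      rw [e1, e2, Tr p f L x hx (1 - (b : ℤ) - (L : ℤ)) ((b : ℤ) + 1), sub_self]
    show Hs p f x (b + L) = Hs p f x b
    unfold Hs
    rw [hadd]
    rw [hz, add_zero]
  rcases le_total a b with hab | hab
  · obtain ⟨L, rfl⟩ := Nat.exists_eq_add_of_le hab
    have hZ : (p ^ ((a : ℤ) + (L : ℤ))) x = (p ^ ((a : ℤ))) x := by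
      have : (p ^ (((a + L : ℕ) : ℤ))) x = (p ^ ((a : ℤ))) x := by
        rw [zpow_natCast, zpow_natCast]; exact h.symm
      rwa [show (((a + L : ℕ)) : ℤ) = (a : ℤ) + (L : ℤ) by push_cast; ring] at this
    have hx : (p ^ (L : ℤ)) x = x := by
      have := move2 p x ((a : ℤ) + L) (a : ℤ) (L : ℤ) 0 hZ (Or.inl (by ring))
      simpa using this
    exact (main x a L hx).symm
  · obtain ⟨L, rfl⟩ := Nat.exists_eq_add_of_le hab
    have hZ : (p ^ ((b : ℤ) + (L : ℤ))) x = (p ^ ((b : ℤ))) x := by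
      have : (p ^ (((b + L : ℕ) : ℤ))) x = (p ^ ((b : ℤ))) x := by
        rw [zpow_natCast, zpow_natCast]; exact h
      rwa [show (((b + L : ℕ)) : ℤ) = (b : ℤ) + (L : ℤ) by push_cast; ring] at this
    have hx : (p ^ (L : ℤ)) x = x := by
      have := move2 p x ((b : ℤ) + L) (b : ℤ) (L : ℤ) 0 hZ (Or.inl (by ring))
      simpa using this
    exact main x b L hx

end GS

namespace GS

theorem exists_conj {k n : ℕ} (hn : 1 ≤ n) (g : GS k n) :
    ∃ c ∈ K k n hn, c * g * c⁻¹ = sgm g := by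
  classical
  obtain ⟨f, p⟩ := g
  set ν := lastPt n hn with hνdef
  obtain ⟨rep, repν, rep_sc, rep_congr⟩ :
      ∃ rep : Fin n → Fin n, rep ν = ν ∧ (∀ i, p.SameCycle (rep i) i) ∧
        (∀ i j, p.SameCycle i j → rep i = rep j) := by
    refine ⟨fun i => if p.SameCycle ν i then ν
      else (Finset.univ.filter fun z => p.SameCycle i z).min'
        ⟨i, Finset.mem_filter.2 ⟨Finset.mem_univ i, Equiv.Perm.SameCycle.refl p i⟩⟩, ?_, ?_, ?_⟩
    · simp [Equiv.Perm.SameCycle.refl]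
    · intro i
      by_cases h : p.SameCycle ν i
      · simp [h]
      · simp only [if_neg h]
        have hmem := Finset.min'_mem (Finset.univ.filter fun z => p.SameCycle i z)
          ⟨i, Finset.mem_filter.2 ⟨Finset.mem_univ i, Equiv.Perm.SameCycle.refl p i⟩⟩
        exact ((Finset.mem_filter.1 hmem).2).symm
    · intro i j hij
      have hset : (Finset.univ.filter fun z => p.SameCycle i z)
          = Finset.univ.filter fun z => p.SameCycle j z := by
        ext z
        simp only [Finset.mem_filter, Finset.mem_univ, true_and]
        exact ⟨hij.symm.trans, hij.trans⟩
      by_cases h : p.SameCycle ν i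
      · simp only [if_pos h, if_pos (h.trans hij)]
      · simp only [if_neg h, if_neg fun hj : p.SameCycle ν j => h (hj.trans hij.symm)]
        have key : ∀ (h1 : (Finset.univ.filter fun z => p.SameCycle i z).Nonempty)
            (h2 : (Finset.univ.filter fun z => p.SameCycle j z).Nonempty),
            (Finset.univ.filter fun z => p.SameCycle i z).min' h1
              = (Finset.univ.filter fun z => p.SameCycle j z).min' h2 := by
          rw [hset]
          intro h1 h2
          rfl
        exact key _ _
  have exE : ∀ i, ∃ m : ℕ, (p ^ m) (rep i) = i := by
    intro i
    obtain ⟨m, _, hm⟩ := (rep_sc i).exists_pow_eq'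
    exact ⟨m, hm⟩
  choose e he using exE
  have heZ : ∀ i, (p ^ ((e i : ℤ))) (rep i) = i := by
    intro i; rw [zpow_natCast]; exact he i
  set t : Fin n → Fin n := fun i => (p ^ (-(e i : ℤ))) (rep i) with htdef
  have rep_t : ∀ i, rep (t i) = rep i := by
    intro i
    refine rep_congr _ _ ?_
    have h1 : p.SameCycle (rep i) (t i) := ⟨-(e i : ℤ), rfl⟩
    exact h1.symm.trans (rep_sc i)
  have t_invol : Function.Involutive t := by
    intro i
    have h1 : (p ^ ((e (t i) : ℤ))) (rep i) = (p ^ (-(e i : ℤ))) (rep i) := by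
      have := heZ (t i)
      rwa [rep_t i] at this
    have h2 : (p ^ (-(e (t i) : ℤ))) (rep i) = (p ^ ((e i : ℤ))) (rep i) :=
      move2 p (rep i) ((e (t i) : ℤ)) (-(e i : ℤ)) (-(e (t i) : ℤ)) ((e i : ℤ)) h1
        (Or.inr (by ring))
    show (p ^ (-(e (t i) : ℤ))) (rep (t i)) = i
    rw [rep_t i, h2, heZ i]
  have t_p_t : ∀ i, t (p (t i)) = p⁻¹ i := by
    intro i
    have hpt : p (t i) = (p ^ ((1 : ℤ) + -(e i : ℤ))) (rep i) := by
      have h0 := zp p 1 (-(e i : ℤ)) (rep i)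
      rw [zpow_one] at h0
      exact h0
    have hrep2 : rep (p (t i)) = rep i := by
      refine rep_congr _ _ (Equiv.Perm.SameCycle.trans
        (Equiv.Perm.SameCycle.symm ⟨(1 : ℤ) + -(e i : ℤ), hpt.symm⟩) (rep_sc i))
    have h1 : (p ^ ((e (p (t i)) : ℤ))) (rep i) = (p ^ ((1 : ℤ) + -(e i : ℤ))) (rep i) := by
      have := heZ (p (t i))
      rw [hrep2] at this
      rw [this, hpt]
    have h2 : (p ^ (-(e (p (t i)) : ℤ))) (rep i) = (p ^ (-1 + (e i : ℤ))) (rep i) :=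
      move2 p (rep i) ((e (p (t i)) : ℤ)) ((1 : ℤ) + -(e i : ℤ)) (-(e (p (t i)) : ℤ))
        (-1 + (e i : ℤ)) h1 (Or.inr (by ring))
    show (p ^ (-(e (p (t i)) : ℤ))) (rep (p (t i))) = p⁻¹ i
    rw [hrep2, h2]
    have h3 := zp p (-1) ((e i : ℤ)) (rep i)
    rw [← h3, heZ i, zpow_neg_one]
  have tν : t ν = ν := by
    show (p ^ (-(e ν : ℤ))) (rep ν) = ν
    have h1 : (p ^ ((e ν : ℤ))) ν = (p ^ (0 : ℤ)) ν := by
      rw [zpow_zero]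
      have := heZ ν
      rw [repν] at this
      simpa using this
    have h2 := move2 p ν ((e ν : ℤ)) 0 (-(e ν : ℤ)) 0 h1 (Or.inr (by ring))
    rw [repν]
    simpa using h2
  set hfn : Fin n → ZMod k := fun i => - Hs p f (rep i) (e i) with hhfn
  have hfnν : hfn ν = 0 := by
    have h0 : (p ^ (e ν)) ν = (p ^ (0 : ℕ)) ν := by
      have := he ν
      rw [repν] at this
      simpa using this
    have hW := Weq p f (x := ν) h0
    show - Hs p f (rep ν) (e ν) = 0
    rw [repν, hW]
    simp [Hs]
  have keyh : ∀ j, hfn (p⁻¹ j) - hfn j = f (p (t j)) - f j := by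
    intro j
    have hrepj : rep (p⁻¹ j) = rep j := rep_congr _ _ ⟨1, by simp⟩
    have hm : (p ^ (e j)) (rep j) = j := he j
    have hm' : (p ^ (e (p⁻¹ j))) (rep j) = p⁻¹ j := by rw [← hrepj]; exact he _
    have hm'1 : (p ^ (e (p⁻¹ j) + 1)) (rep j) = j := by
      have h1 : p ((p ^ (e (p⁻¹ j))) (rep j)) = j := by rw [hm', ← Equiv.Perm.mul_apply, mul_inv_cancel, Equiv.Perm.one_apply]
      rw [pow_succ', Equiv.Perm.mul_apply]
      exact h1
    have hWnat : (p ^ (e (p⁻¹ j) + 1)) (rep j) = (p ^ (e j)) (rep j) := hm'1.trans hm.symm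
    have HsEq : Hs p f (rep j) (e (p⁻¹ j) + 1) = Hs p f (rep j) (e j) := Weq p f hWnat
    have hZ : (p ^ (((e (p⁻¹ j) : ℤ)) + 1)) (rep j) = (p ^ ((e j : ℤ))) (rep j) := by
      rw [show ((e (p⁻¹ j) : ℤ) + 1) = ((e (p⁻¹ j) + 1 : ℕ) : ℤ) by push_cast; ring,
        zpow_natCast, zpow_natCast]
      exact hWnat
    have hshift : (p ^ (-(e (p⁻¹ j) : ℤ))) (rep j) = (p ^ ((1 : ℤ) + -(e j : ℤ))) (rep j) :=
      move2 p (rep j) ((e (p⁻¹ j) : ℤ) + 1) ((e j : ℤ)) (-(e (p⁻¹ j) : ℤ))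
        ((1 : ℤ) + -(e j : ℤ)) hZ (Or.inr (by ring))
    have succ : Hs p f (rep j) (e (p⁻¹ j) + 1)
        = Hs p f (rep j) (e (p⁻¹ j))
          + (f ((p ^ (-(e (p⁻¹ j) : ℤ))) (rep j)) - f ((p ^ ((e (p⁻¹ j) : ℤ) + 1)) (rep j))) := by
      unfold Hs
      rw [Finset.sum_range_succ]
    have fj : f ((p ^ ((e (p⁻¹ j) : ℤ) + 1)) (rep j)) = f j := by
      rw [hZ, heZ j]
    have fpt : f ((p ^ (-(e (p⁻¹ j) : ℤ))) (rep j)) = f (p (t j)) := by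
      rw [hshift]
      have hpt : p (t j) = (p ^ ((1 : ℤ) + -(e j : ℤ))) (rep j) := by
        have h0 := zp p 1 (-(e j : ℤ)) (rep j)
        rw [zpow_one] at h0
        exact h0
      rw [hpt]
    show - Hs p f (rep (p⁻¹ j)) (e (p⁻¹ j)) - (- Hs p f (rep j) (e j)) = f (p (t j)) - f j
    rw [hrepj]
    linear_combination succ - HsEq + fpt - fj
  -- assemble the conjugator
  refine ⟨(hfn, Function.Involutive.toPerm t t_invol), ?_, ?_⟩
  · exact mem_K.2 ⟨tν, hfnν⟩
  · refine Prod.ext ?_ ?_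
    · funext i
      show hfn (p⁻¹ (t i)) + f (t i) + -(hfn (t i)) = f (p i)
      have hk := keyh (t i)
      rw [t_invol i] at hk
      linear_combination hk
    · show (Function.Involutive.toPerm t t_invol)⁻¹ * (p * Function.Involutive.toPerm t t_invol)
          = p⁻¹
      refine Equiv.ext fun i => ?_
      show t (p (t i)) = p⁻¹ i
      exact t_p_t i

theorem doubleCoset {k n : ℕ} (hn : 1 ≤ n) (x y : GS k n) (hy : y ∈ K k n hn) :
    ∃ a ∈ K k n hn, ∃ b ∈ K k n hn, sgm x = a * x * b ∧ sgm y = a * y * b := by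
  obtain ⟨c, hc, hconj⟩ := exists_conj hn (x * y⁻¹)
  refine ⟨sgm y * c, mul_mem (sgm_mem_K hn hy) hc,
    y⁻¹ * c⁻¹, mul_mem (inv_mem hy) (inv_mem hc), ?_, ?_⟩
  · have h1 : sgm y * c * x * (y⁻¹ * c⁻¹) = sgm y * (c * (x * y⁻¹) * c⁻¹) := by group
    rw [h1, hconj, ← sgm_mul]
    congr 1
    group
  · have h1 : sgm y * c * y * (y⁻¹ * c⁻¹) = sgm y * (c * c⁻¹) := by group
    rw [h1]
    simp

end GS

open GS in
/-- `(G × K, diag K)` with `G = Z_k ≀ S_n`, `K = Z_k ≀ S_{n-1}` is a Gelfand pair: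
convolution of functions on `G × K` that are constant on `diag K`-double cosets commutes. -/
theorem gelfand_pair_convolution_comm (k n : ℕ) (hk : 1 ≤ k) (hn : 1 ≤ n)
    (F₁ F₂ : GS k n × ↥(K k n hn) → ℂ)
    (h₁ : ∀ (w : GS k n × ↥(K k n hn)) (a b : ↥(K k n hn)),
      F₁ (((a : GS k n), a) * w * ((b : GS k n), b)) = F₁ w)
    (h₂ : ∀ (w : GS k n × ↥(K k n hn)) (a b : ↥(K k n hn)),
      F₂ (((a : GS k n), a) * w * ((b : GS k n), b)) = F₂ w)
    (w : GS k n × ↥(K k n hn)) :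
    ∑ᶠ h : GS k n × ↥(K k n hn), F₁ (w * h⁻¹) * F₂ h =
      ∑ᶠ h : GS k n × ↥(K k n hn), F₂ (w * h⁻¹) * F₁ h := by
  
  classical
  haveI : NeZero k := ⟨by omega⟩
  haveI : Fintype (GS k n) := inferInstanceAs (Fintype ((Fin n → ZMod k) × Equiv.Perm (Fin n)))
  rw [finsum_eq_sum_of_fintype, finsum_eq_sum_of_fintype]
  have hKs : ∀ y : ↥(K k n hn), sgm (y : GS k n) ∈ K k n hn := fun y => sgm_mem_K hn y.2
  set S : GS k n × ↥(K k n hn) → GS k n × ↥(K k n hn) :=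
    fun u => (sgm u.1, ⟨sgm (u.2 : GS k n), hKs u.2⟩) with hSdef
  have Santi : ∀ u v, S (u * v) = S v * S u := by
    intro u v
    refine Prod.ext (sgm_mul u.1 v.1) (Subtype.ext ?_)
    exact sgm_mul (u.2 : GS k n) (v.2 : GS k n)
  have Sinvol : Function.Involutive S := by
    intro u
    exact Prod.ext (sgm_sgm u.1) (Subtype.ext (sgm_sgm (u.2 : GS k n)))
  have Sone : S 1 = 1 := Prod.ext sgm_one (Subtype.ext sgm_one)
  have Sinv : ∀ u, S u⁻¹ = (S u)⁻¹ := by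
    intro u
    have h : S u * S u⁻¹ = 1 := by
      rw [← Santi u⁻¹ u, inv_mul_cancel, Sone]
    exact eq_inv_of_mul_eq_one_right h
  have hSF : ∀ F : GS k n × ↥(K k n hn) → ℂ,
      (∀ (w : GS k n × ↥(K k n hn)) (a b : ↥(K k n hn)),
        F (((a : GS k n), a) * w * ((b : GS k n), b)) = F w) →
      ∀ u, F (S u) = F u := by
    intro F hF u
    obtain ⟨a, ha, b, hb, hx, hy⟩ := doubleCoset hn u.1 (u.2 : GS k n) u.2.2
    have hSu : S u = (((⟨a, ha⟩ : ↥(K k n hn)) : GS k n), ⟨a, ha⟩) * u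
        * (((⟨b, hb⟩ : ↥(K k n hn)) : GS k n), ⟨b, hb⟩) := by
      exact Prod.ext hx (Subtype.ext hy)
    rw [hSu, hF]
  have hone : ((((1 : ↥(K k n hn)) : GS k n), (1 : ↥(K k n hn)))
      : GS k n × ↥(K k n hn)) = 1 := rfl
  have hL : ∀ F : GS k n × ↥(K k n hn) → ℂ,
      (∀ (w : GS k n × ↥(K k n hn)) (a b : ↥(K k n hn)),
        F (((a : GS k n), a) * w * ((b : GS k n), b)) = F w) →
      ∀ v (a : ↥(K k n hn)), F (((a : GS k n), a) * v) = F v := by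
    intro F hF v a
    have h := hF v a 1
    rwa [hone, mul_one] at h
  have hR : ∀ F : GS k n × ↥(K k n hn) → ℂ,
      (∀ (w : GS k n × ↥(K k n hn)) (a b : ↥(K k n hn)),
        F (((a : GS k n), a) * w * ((b : GS k n), b)) = F w) →
      ∀ v (b : ↥(K k n hn)), F (v * ((b : GS k n), b)) = F v := by
    intro F hF v b
    have h := hF v 1 b
    rwa [hone, one_mul] at h
  obtain ⟨a, ha, b, hb, hx, hy⟩ := doubleCoset hn w.1 (w.2 : GS k n) w.2.2
  set A : GS k n × ↥(K k n hn) := (((⟨a, ha⟩ : ↥(K k n hn)) : GS k n), ⟨a, ha⟩) with hA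
  set B : GS k n × ↥(K k n hn) := (((⟨b, hb⟩ : ↥(K k n hn)) : GS k n), ⟨b, hb⟩) with hB
  have hSw : S w = A * w * B := Prod.ext hx (Subtype.ext hy)
  have step1 : ∑ h : GS k n × ↥(K k n hn), F₁ (S w * h⁻¹) * F₂ h
      = ∑ h : GS k n × ↥(K k n hn), F₁ (w * h⁻¹) * F₂ h := by
    rw [← Equiv.sum_comp (Equiv.mulRight B) (fun h => F₁ (S w * h⁻¹) * F₂ h)]
    refine Finset.sum_congr rfl fun h _ => ?_
    have e1 : S w * (Equiv.mulRight B h)⁻¹ = A * (w * h⁻¹) := by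
      simp only [Equiv.coe_mulRight]
      rw [hSw]
      group
    show F₁ (S w * (Equiv.mulRight B h)⁻¹) * F₂ (Equiv.mulRight B h) = _
    rw [e1, hL F₁ h₁]
    show F₁ (w * h⁻¹) * F₂ (h * B) = _
    rw [hR F₂ h₂]
  have step2 : ∑ h : GS k n × ↥(K k n hn), F₁ (S w * h⁻¹) * F₂ h
      = ∑ h : GS k n × ↥(K k n hn), F₁ (h⁻¹ * w) * F₂ h := by
    rw [← Equiv.sum_comp (Function.Involutive.toPerm S Sinvol)
      (fun h => F₁ (S w * h⁻¹) * F₂ h)]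
    refine Finset.sum_congr rfl fun h _ => ?_
    show F₁ (S w * (S h)⁻¹) * F₂ (S h) = _
    have e2 : S w * (S h)⁻¹ = S (h⁻¹ * w) := by
      rw [← Sinv, ← Santi]
    rw [e2, hSF F₁ h₁, hSF F₂ h₂]
  have step3 : ∑ h : GS k n × ↥(K k n hn), F₁ (h⁻¹ * w) * F₂ h
      = ∑ h : GS k n × ↥(K k n hn), F₂ (w * h⁻¹) * F₁ h := by
    rw [← Equiv.sum_comp ((Equiv.inv (GS k n × ↥(K k n hn))).trans (Equiv.mulLeft w))
      (fun h => F₁ (h⁻¹ * w) * F₂ h)]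
    refine Finset.sum_congr rfl fun h _ => ?_
    show F₁ ((w * h⁻¹)⁻¹ * w) * F₂ (w * h⁻¹) = _
    have e3 : (w * h⁻¹)⁻¹ * w = h := by group
    rw [e3]
    ring
  rw [← step1, step2, step3]
end

section
/- Let n ≥ 1, k ≥ 1, let G = Z_k ≀ S_n, let K = Z_k ≀ S_{n−1} be its subgroup, and let diag K = {(z, z) : z ∈ K} ≤ G × K. Then the induced representation 1_{diag K}^{G × K} is multiplicity free; equivalently, for every irreducible finite-dimensional complex representation V of the finite group G × K, the subspace of vectors of V fixed by every element (z, z) of diag K has dimension at most 1. -/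
open scoped Classical

namespace CombAux

open Equiv Function Finset

variable {n : ℕ} (p : Equiv.Perm (Fin n))

lemma isPeriodic (x : Fin n) : IsPeriodicPt ⇑p (orderOf p) x := by
  unfold IsPeriodicPt IsFixedPt
  simp [Equiv.Perm.iterate_eq_pow, pow_orderOf_eq_one]

lemma rpos (x : Fin n) : 0 < minimalPeriod ⇑p x :=
  IsPeriodicPt.minimalPeriod_pos (orderOf_pos p) (isPeriodic p x)

lemma pow_r_fix (x : Fin n) : (p ^ (minimalPeriod ⇑p x)) x = x := by
  have := isPeriodicPt_minimalPeriod ⇑p x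
  rwa [IsPeriodicPt, IsFixedPt, Equiv.Perm.iterate_eq_pow] at this

lemma zpow_r_fix (x : Fin n) (c : ℤ) :
    (p ^ ((minimalPeriod ⇑p x : ℤ) * c)) x = x := by
  rw [zpow_mul, zpow_natCast]
  exact IsFixedPt.perm_zpow (pow_r_fix p x) c

lemma zpow_emod_apply (x : Fin n) (z : ℤ) :
    (p ^ z) x = (p ^ (z % (minimalPeriod ⇑p x : ℤ))) x := by
  conv_lhs => rw [← Int.emod_add_mul_ediv z (minimalPeriod ⇑p x : ℤ)]
  rw [zpow_add]
  simp only [Equiv.Perm.mul_apply]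
  rw [zpow_r_fix]

lemma pow_apply_eq_iff (x : Fin n) {s t : ℕ} :
    (p ^ s) x = (p ^ t) x ↔ s % (minimalPeriod ⇑p x) = t % (minimalPeriod ⇑p x) := by
  constructor
  · intro h
    have hs : (⇑p)^[s % minimalPeriod ⇑p x] x = (⇑p)^[t % minimalPeriod ⇑p x] x := by
      rw [iterate_mod_minimalPeriod_eq, iterate_mod_minimalPeriod_eq]
      simpa [Equiv.Perm.iterate_eq_pow] using h
    exact iterate_eq_iterate_iff_of_lt_minimalPeriod
      (Nat.mod_lt _ (rpos p x)) (Nat.mod_lt _ (rpos p x)) |>.mp hs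
  · intro h
    have hs := iterate_mod_minimalPeriod_eq (f := ⇑p) (x := x) (n := s)
    have ht := iterate_mod_minimalPeriod_eq (f := ⇑p) (x := x) (n := t)
    simp only [Equiv.Perm.iterate_eq_pow] at hs ht
    rw [← hs, ← ht, h]

lemma zpow_apply_eq_iff (x : Fin n) {z w : ℤ} :
    (p ^ z) x = (p ^ w) x ↔ z % (minimalPeriod ⇑p x : ℤ) = w % (minimalPeriod ⇑p x : ℤ) := by
  set r : ℕ := minimalPeriod ⇑p x with hr
  have hrpos : (0:ℤ) < (r:ℤ) := by exact_mod_cast rpos p x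
  constructor
  · intro h
    rw [zpow_emod_apply, zpow_emod_apply (z := w)] at h
    have h1 : (0:ℤ) ≤ z % r := Int.emod_nonneg z hrpos.ne'
    have h2 : (0:ℤ) ≤ w % r := Int.emod_nonneg w hrpos.ne'
    rw [← Int.toNat_of_nonneg h1, ← Int.toNat_of_nonneg h2, zpow_natCast, zpow_natCast] at h
    have h3 : (z % r).toNat < r := by
      have := Int.emod_lt_of_pos z hrpos
      omega
    have h4 : (w % r).toNat < r := by
      have := Int.emod_lt_of_pos w hrpos
      omega
    have := (pow_apply_eq_iff p x).mp h
    rw [Nat.mod_eq_of_lt h3, Nat.mod_eq_of_lt h4] at this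
    omega
  · intro h
    rw [zpow_emod_apply, zpow_emod_apply (z := w), h]

/-! ### base point -/

variable (ν : Fin n)

/-- base point of the cycle of `i`: `ν` on the cycle of `ν`, else min of the cycle. -/
noncomputable def bp (i : Fin n) : Fin n :=
  if p.SameCycle ν i then ν
  else (Finset.univ.filter fun j => p.SameCycle i j).min'
    ⟨i, by simp [Equiv.Perm.SameCycle.refl]⟩

lemma sameCycle_bp (i : Fin n) : p.SameCycle i (bp p ν i) := by
  unfold bp
  split_ifs with h
  · exact h.symm
  · have := Finset.min'_mem (Finset.univ.filter fun j => p.SameCycle i j)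
      ⟨i, by simp [Equiv.Perm.SameCycle.refl]⟩
    simpa using this

lemma bp_congr {i j : Fin n} (h : p.SameCycle i j) : bp p ν i = bp p ν j := by
  unfold bp
  have h1 : p.SameCycle ν i ↔ p.SameCycle ν j := ⟨fun h' => h'.trans h, fun h' => h'.trans h.symm⟩
  have h2 : (Finset.univ.filter fun x => p.SameCycle i x)
      = Finset.univ.filter fun x => p.SameCycle j x := by
    apply Finset.filter_congr
    intro x _
    exact ⟨fun h' => h.symm.trans h', fun h' => h.trans h'⟩
  split_ifs with hi hj hj
  · rfl
  · exact absurd (h1.mp hi) hj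
  · exact absurd (h1.mpr hj) hi
  · congr 1

lemma bp_idem (i : Fin n) : bp p ν (bp p ν i) = bp p ν i :=
  (bp_congr p ν (sameCycle_bp p ν i)).symm

lemma bp_nu : bp p ν ν = ν := by
  unfold bp
  simp [Equiv.Perm.SameCycle.refl]

lemma bp_zpow (i : Fin n) (z : ℤ) : bp p ν ((p ^ z) (bp p ν i)) = bp p ν i := by
  rw [bp_congr p ν (j := bp p ν i) ⟨-z, by simp⟩, bp_idem]

lemma exists_pow_bp (i : Fin n) : ∃ m : ℕ, (p ^ m) (bp p ν i) = i :=
  ((sameCycle_bp p ν i).symm.exists_pow_eq').imp fun _ h => h.2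

/-- discrete log of `i` with respect to the base point of its cycle. -/
noncomputable def md (i : Fin n) : ℕ := Nat.find (exists_pow_bp p ν i)

lemma md_spec (i : Fin n) : (p ^ md p ν i) (bp p ν i) = i := Nat.find_spec (exists_pow_bp p ν i)

lemma md_lt (i : Fin n) : md p ν i < minimalPeriod ⇑p (bp p ν i) := by
  have h : (p ^ (md p ν i % minimalPeriod ⇑p (bp p ν i))) (bp p ν i) = i := by
    rw [(pow_apply_eq_iff p _).mpr (Nat.mod_mod_of_dvd (md p ν i) dvd_rfl)]
    exact md_spec p ν i
  have : md p ν i ≤ md p ν i % minimalPeriod ⇑p (bp p ν i) := Nat.find_le h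
  have hlt := Nat.mod_lt (md p ν i) (rpos p (bp p ν i))
  omega

lemma md_unique {i : Fin n} {t : ℕ} (ht : t < minimalPeriod ⇑p (bp p ν i))
    (h : (p ^ t) (bp p ν i) = i) : md p ν i = t := by
  have h1 := md_spec p ν i
  have := (pow_apply_eq_iff p (bp p ν i)).mp (h1.trans h.symm)
  rw [Nat.mod_eq_of_lt (md_lt p ν i), Nat.mod_eq_of_lt ht] at this
  exact this

lemma md_nu : md p ν ν = 0 :=
  md_unique p ν (rpos p _) (by rw [bp_nu p ν]; simp)


/-! ### the reversing permutation `qf` and colour-correction `hf` -/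

noncomputable def qf (i : Fin n) : Fin n := (p ^ (-(md p ν i : ℤ))) (bp p ν i)

lemma bp_qf (i : Fin n) : bp p ν (qf p ν i) = bp p ν i := bp_zpow p ν i _

lemma qf_spec (i : Fin n) : qf p ν i = (p ^ (md p ν (qf p ν i))) (bp p ν i) := by
  conv_lhs => rw [← md_spec p ν (qf p ν i)]
  rw [bp_qf]

lemma md_qf_mod (i : Fin n) :
    ((md p ν (qf p ν i) : ℤ)) % (minimalPeriod ⇑p (bp p ν i) : ℤ)
      = (-(md p ν i : ℤ)) % (minimalPeriod ⇑p (bp p ν i) : ℤ) := by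
  apply (zpow_apply_eq_iff p (bp p ν i)).mp
  rw [zpow_natCast, ← qf_spec]
  rfl

lemma qf_invol (i : Fin n) : qf p ν (qf p ν i) = i := by
  have h1 : qf p ν (qf p ν i) = (p ^ (-(md p ν (qf p ν i) : ℤ))) (bp p ν i) := by
    show (p ^ (-(md p ν (qf p ν i) : ℤ))) (bp p ν (qf p ν i)) = _
    rw [bp_qf]
  rw [h1]
  conv_rhs => rw [← md_spec p ν i, ← zpow_natCast]
  apply (zpow_apply_eq_iff p (bp p ν i)).mpr
  have h2 : (-(md p ν (qf p ν i) : ℤ)) % (minimalPeriod ⇑p (bp p ν i) : ℤ)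
      = (-(-(md p ν i : ℤ))) % (minimalPeriod ⇑p (bp p ν i) : ℤ) :=
    Int.ModEq.neg (md_qf_mod p ν i)
  rw [h2, neg_neg]

lemma qf_p (i : Fin n) : qf p ν (p i) = p⁻¹ (qf p ν i) := by
  have hb : bp p ν (p i) = bp p ν i := (bp_congr p ν ⟨1, by simp⟩).symm
  have h1 : qf p ν (p i) = (p ^ (-(md p ν (p i) : ℤ))) (bp p ν i) := by
    show (p ^ (-(md p ν (p i) : ℤ))) (bp p ν (p i)) = _
    rw [hb]
  have hmd : ((md p ν (p i) : ℤ)) % (minimalPeriod ⇑p (bp p ν i) : ℤ)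
      = ((md p ν i : ℤ) + 1) % (minimalPeriod ⇑p (bp p ν i) : ℤ) := by
    apply (zpow_apply_eq_iff p (bp p ν i)).mp
    rw [zpow_natCast]
    have hs : (p ^ (md p ν (p i))) (bp p ν i) = p i := by
      rw [← hb]; exact md_spec p ν (p i)
    rw [hs, add_comm, zpow_add, zpow_one, zpow_natCast]
    simp only [Equiv.Perm.mul_apply]
    rw [md_spec p ν i]
  rw [h1]
  have h2 : p⁻¹ (qf p ν i) = (p ^ (-(md p ν i : ℤ) - 1)) (bp p ν i) := by
    unfold qf
    rw [sub_eq_add_neg, add_comm, zpow_add]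
    simp [Equiv.Perm.mul_apply]
  rw [h2]
  apply (zpow_apply_eq_iff p (bp p ν i)).mpr
  have h3 := Int.ModEq.neg hmd
  have h4 : (-(md p ν i : ℤ) - 1) = -((md p ν i : ℤ) + 1) := by ring
  rw [h4]
  exact h3

lemma qf_nu : qf p ν ν = ν := by
  unfold qf
  rw [md_nu, bp_nu]
  simp

variable {k : ℕ} (f : Fin n → ZMod k)

noncomputable def hf (i : Fin n) : ZMod k :=
  ∑ t ∈ Finset.range (md p ν i),
    (f ((p ^ (t + 1)) (bp p ν i)) - f ((p ^ (-(t : ℤ))) (bp p ν i)))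

lemma hf_nu : hf p ν f ν = 0 := by
  unfold hf
  rw [md_nu]
  simp


lemma shift_sum {k : ℕ} (g : ℕ → ZMod k) (r : ℕ) (hg : g r = g 0) :
    ∑ t ∈ Finset.range r, g (t + 1) = ∑ t ∈ Finset.range r, g t := by
  have h1 := Finset.sum_range_succ g r
  have h2 := Finset.sum_range_succ' g r
  rw [h1, hg] at h2
  exact add_right_cancel h2.symm

lemma window {k : ℕ} (f : Fin n → ZMod k) (B : Fin n) (a : ℤ) :
    ∑ t ∈ Finset.range (minimalPeriod ⇑p B), f ((p ^ (a + t)) B)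
      = ∑ t ∈ Finset.range (minimalPeriod ⇑p B), f ((p ^ (t : ℤ)) B) := by
  set r := minimalPeriod ⇑p B with hr
  have hfix : ∀ b : ℤ, f ((p ^ (b + (r : ℤ))) B) = f ((p ^ b) B) := by
    intro b
    rw [zpow_add]
    simp only [Equiv.Perm.mul_apply]
    rw [zpow_natCast]
    rw [show (p ^ r) B = B from pow_r_fix p B]
  induction a using Int.induction_on with
  | zero => simp
  | succ a ih =>
      rw [← ih]
      have : ∀ t : ℕ, f ((p ^ ((a : ℤ) + 1 + t)) B) = f ((p ^ ((a : ℤ) + (t+1:ℕ))) B) := by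
        intro t
        congr 2
        push_cast
        ring
      calc ∑ t ∈ Finset.range r, f ((p ^ ((a : ℤ) + 1 + t)) B)
          = ∑ t ∈ Finset.range r, f ((p ^ ((a : ℤ) + (t+1:ℕ))) B) :=
            Finset.sum_congr rfl fun t _ => this t
        _ = ∑ t ∈ Finset.range r, f ((p ^ ((a : ℤ) + t)) B) := by
            apply shift_sum (fun t => f ((p ^ ((a : ℤ) + t)) B))
            have : ((r : ℕ) : ℤ) = (0 : ℤ) + r := by ring
            show f ((p ^ ((a : ℤ) + (r:ℕ))) B) = f ((p ^ ((a : ℤ) + (0:ℕ))) B)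
            push_cast
            rw [hfix a]
            norm_num
  | pred a ih =>
      rw [← ih]
      have key : ∑ t ∈ Finset.range r, f ((p ^ ((-(a:ℤ) - 1) + (t+1:ℕ))) B)
          = ∑ t ∈ Finset.range r, f ((p ^ ((-(a:ℤ) - 1) + t)) B) := by
        apply shift_sum (fun t => f ((p ^ ((-(a:ℤ) - 1) + t)) B))
        show f ((p ^ ((-(a:ℤ) - 1) + (r:ℕ))) B) = f ((p ^ ((-(a:ℤ) - 1) + (0:ℕ))) B)
        push_cast
        rw [hfix (-(a:ℤ) - 1)]
        norm_num
      calc ∑ t ∈ Finset.range r, f ((p ^ (-(a:ℤ) - 1 + t)) B)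
          = ∑ t ∈ Finset.range r, f ((p ^ ((-(a:ℤ) - 1) + (t+1:ℕ))) B) := key.symm
        _ = ∑ t ∈ Finset.range r, f ((p ^ (-(a:ℤ) + t)) B) := by
            apply Finset.sum_congr rfl
            intro t _
            congr 2
            push_cast
            ring


lemma md_B (i : Fin n) : md p ν (bp p ν i) = 0 := by
  apply md_unique p ν (rpos p _)
  rw [bp_idem]
  simp

lemma qf_B (i : Fin n) : qf p ν (bp p ν i) = bp p ν i := by
  unfold qf
  rw [md_B, bp_idem]
  simp

lemma fz_mod {k : ℕ} (f : Fin n → ZMod k) (B : Fin n) {z w : ℤ}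
    (h : z % (minimalPeriod ⇑p B : ℤ) = w % (minimalPeriod ⇑p B : ℤ)) :
    f ((p ^ z) B) = f ((p ^ w) B) := by
  rw [(zpow_apply_eq_iff p B).mpr h]

lemma main_eq {k : ℕ} (f : Fin n → ZMod k) (i : Fin n) :
    hf p ν f (p⁻¹ (qf p ν i)) + f (qf p ν i) - hf p ν f (qf p ν i) = f (p i) := by
  have hbq : bp p ν (qf p ν i) = bp p ν i := bp_qf p ν i
  set B := bp p ν i with hB
  set r := minimalPeriod ⇑p B with hr
  have hrpos : 0 < r := rpos p B
  set m := md p ν i with hm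
  set m' := md p ν (qf p ν i) with hm'
  have hq : qf p ν i = (p ^ m') B := by
    conv_lhs => rw [← md_spec p ν (qf p ν i)]
    rw [hbq]
  have hm'lt : m' < r := by
    have := md_lt p ν (qf p ν i)
    rwa [hbq] at this
  have hmlt : m < r := md_lt p ν i
  have hpq : p⁻¹ (qf p ν i) = (p ^ ((m' : ℤ) - 1)) B := by
    rw [hq, ← zpow_natCast p m', show (m' : ℤ) - 1 = -1 + m' by ring, zpow_add]
    simp [Equiv.Perm.mul_apply]
  have hbpq : bp p ν (p⁻¹ (qf p ν i)) = B := by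
    rw [hpq, hB, bp_zpow]
  set m'' := md p ν (p⁻¹ (qf p ν i)) with hm''
  have hm''lt : m'' < r := by
    have := md_lt p ν (p⁻¹ (qf p ν i))
    rwa [hbpq] at this
  have hm''mod : (m'' : ℤ) % (r : ℤ) = ((m' : ℤ) - 1) % (r : ℤ) := by
    apply (zpow_apply_eq_iff p B).mp
    rw [zpow_natCast]
    have h1 : (p ^ m'') B = p⁻¹ (qf p ν i) := by
      conv_rhs => rw [← md_spec p ν (p⁻¹ (qf p ν i)), hbpq]
    rw [h1, hpq]
  have hm'mod : (m' : ℤ) % (r : ℤ) = (-(m : ℤ)) % (r : ℤ) := md_qf_mod p ν i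
  have hpi : f (p i) = f ((p ^ ((m : ℤ) + 1)) B) := by
    have : p i = (p ^ (m + 1)) B := by
      rw [pow_succ']
      simp only [Equiv.Perm.mul_apply]
      rw [md_spec p ν i]
    rw [this, ← zpow_natCast]
    push_cast
    rfl
  have hhfq : hf p ν f (qf p ν i)
      = ∑ t ∈ Finset.range m', (f ((p ^ (t + 1)) B) - f ((p ^ (-(t : ℤ))) B)) := by
    unfold hf
    rw [hbq]
  have hhfpq : hf p ν f (p⁻¹ (qf p ν i))
      = ∑ t ∈ Finset.range m'', (f ((p ^ (t + 1)) B) - f ((p ^ (-(t : ℤ))) B)) := by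
    unfold hf
    rw [hbpq]
  rw [hhfq, hhfpq, hq, hpi]
  rcases Nat.eq_zero_or_pos m' with h0 | hpos
  · -- qf i = B, i = B, m = 0
    have hqB : qf p ν i = B := by rw [hq, h0, pow_zero]; rfl
    have hiB : i = B := by
      have := qf_invol p ν i
      rw [hqB, qf_B] at this
      exact this.symm
    have hm0 : m = 0 := by
      rw [hm, hiB, hB, md_B]
    rcases eq_or_lt_of_le (show 1 ≤ r from hrpos) with hr1 | hr2
    · -- r = 1 : p B = B
      have hpB : p B = B := by
        have := pow_r_fix p B
        rw [← hr, ← hr1, pow_one] at this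
        exact this
      have hm''0 : m'' = 0 := by omega
      rw [hm''0, h0, hm0]
      simp [hpB]
    · -- r ≥ 2 : m'' = r - 1
      have hm''eq : m'' = r - 1 := by
        have e1 : (m'' : ℤ) % (r : ℤ) = (m'' : ℤ) :=
          Int.emod_eq_of_lt (by positivity) (by exact_mod_cast hm''lt)
        have e2 : ((m' : ℤ) - 1) % (r : ℤ) = ((r : ℤ) - 1) % (r : ℤ) := by
          rw [h0]
          push_cast
          have h5 : ((r : ℤ) - 1) = (0 - 1) + r * 1 := by ring
          rw [h5, Int.add_mul_emod_self_left]
          norm_num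
        have e3 : ((r : ℤ) - 1) % (r : ℤ) = (r : ℤ) - 1 :=
          Int.emod_eq_of_lt (by omega) (by omega)
        have := hm''mod
        rw [e1, e2, e3] at this
        omega
      rw [hm''eq, h0, hm0]
      simp only [Finset.range_zero, Finset.sum_empty, sub_zero]
      -- goal : ∑_{t<r-1} (f (p^{t+1} B) - f (p^{-t} B)) + f (p^0 B) = f (p^{0+1} B)
      have split : ∀ (g : ℕ → ZMod k), ∑ t ∈ Finset.range r, g t
          = ∑ t ∈ Finset.range (r-1), g t + g (r-1) := by
        intro g
        conv_lhs => rw [show r = (r-1)+1 by omega]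
        exact Finset.sum_range_succ g (r-1)
      have hA : ∑ t ∈ Finset.range (r-1), f ((p ^ (t + 1)) B) + f B
          = ∑ t ∈ Finset.range r, f ((p ^ (t : ℤ)) B) := by
        have h2 := window p f B 1
        rw [split (fun t => f ((p ^ ((1:ℤ) + t)) B))] at h2
        have h3 : ∑ t ∈ Finset.range (r-1), f ((p ^ (t + 1)) B)
            = ∑ t ∈ Finset.range (r-1), f ((p ^ ((1:ℤ) + t)) B) := by
          apply Finset.sum_congr rfl
          intro t _
          rw [← zpow_natCast, show ((t+1:ℕ):ℤ) = (1:ℤ) + t by omega]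
        have h4 : f ((p ^ ((1:ℤ) + ((r-1:ℕ):ℤ))) B) = f B := by
          have h5 : ((1:ℤ) + ((r-1:ℕ):ℤ)) % (r:ℤ) = (0:ℤ) % (r:ℤ) := by
            rw [show ((1:ℤ) + ((r-1:ℕ):ℤ)) = 0 + (r:ℤ) * 1 by omega, Int.add_mul_emod_self_left]
          have h6 := fz_mod p f B h5
          simpa using h6
        rw [h3, ← h4]
        exact h2
      have hD : ∑ t ∈ Finset.range (r-1), f ((p ^ (-(t:ℤ))) B) + f (p B)
          = ∑ t ∈ Finset.range r, f ((p ^ (t : ℤ)) B) := by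
        have h2 := window p f B (2 - (r:ℤ))
        rw [split (fun t => f ((p ^ ((2 - (r:ℤ)) + t)) B))] at h2
        have h3 : ∑ t ∈ Finset.range (r-1), f ((p ^ (-(t:ℤ))) B)
            = ∑ t ∈ Finset.range (r-1), f ((p ^ ((2 - (r:ℤ)) + t)) B) := by
          rw [← Finset.sum_range_reflect (fun t => f ((p ^ (-(t:ℤ))) B)) (r-1)]
          apply Finset.sum_congr rfl
          intro t ht
          simp only [Finset.mem_range] at ht
          rw [show (-((r-1-1-t:ℕ):ℤ)) = (2 - (r:ℤ)) + t by omega]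
        have h4 : f (p B) = f ((p ^ ((2 - (r:ℤ)) + ((r-1:ℕ):ℤ))) B) := by
          rw [show ((2 - (r:ℤ)) + ((r-1:ℕ):ℤ)) = 1 by omega]
          norm_num
        rw [h3, h4]
        exact h2
      have goal1 : ∑ t ∈ Finset.range (r-1), (f ((p ^ (t + 1)) B) - f ((p ^ (-(t:ℤ))) B))
          = f (p B) - f B := by
        rw [Finset.sum_sub_distrib]
        linear_combination hA - hD
      rw [goal1]
      rw [show (((0:ℕ):ℤ) + 1) = (1:ℤ) by norm_num]
      rw [show (p ^ (0:ℕ)) B = B by simp]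
      norm_num
  · -- main case : m' ≥ 1
    have e1 : (m'' : ℤ) % (r : ℤ) = (m'' : ℤ) :=
      Int.emod_eq_of_lt (by exact_mod_cast Nat.zero_le m'') (by exact_mod_cast hm''lt)
    have e2 : ((m' : ℤ) - 1) % (r : ℤ) = (m' : ℤ) - 1 :=
      Int.emod_eq_of_lt (by omega) (by omega)
    have hm''eq : m'' = m' - 1 := by
      have := hm''mod
      rw [e1, e2] at this
      omega
    have hsplit : ∑ t ∈ Finset.range m', (f ((p ^ (t + 1)) B) - f ((p ^ (-(t : ℤ))) B))
        = ∑ t ∈ Finset.range (m'-1), (f ((p ^ (t + 1)) B) - f ((p ^ (-(t : ℤ))) B))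
          + (f ((p ^ ((m'-1) + 1)) B) - f ((p ^ (-((m'-1:ℕ) : ℤ))) B)) := by
      conv_lhs => rw [show m' = (m'-1)+1 by omega]
      exact Finset.sum_range_succ _ (m'-1)
    rw [hm''eq, hsplit]
    rw [show (m'-1)+1 = m' by omega]
    have hfin : f ((p ^ (-((m'-1:ℕ) : ℤ))) B) = f ((p ^ ((m:ℤ) + 1)) B) := by
      apply fz_mod p f B
      have h3 := Int.ModEq.sub (Int.ModEq.refl (1:ℤ))
        (show Int.ModEq (r:ℤ) (m':ℤ) (-(m:ℤ)) from hm'mod)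
      have h4 : ((1:ℤ) - m') % (r:ℤ) = ((1:ℤ) - -(m:ℤ)) % (r:ℤ) := h3
      rw [show (-((m'-1:ℕ) : ℤ)) = (1:ℤ) - m' by omega,
        show ((m:ℤ) + 1) = (1:ℤ) - -(m:ℤ) by ring]
      exact h4
    rw [hfin]
    ring

end CombAux

namespace GSAux

open GS

variable {k n : ℕ}

/-- The anti-automorphism `τ₀ (f, p) = (f ∘ p, p⁻¹)` of `GS k n`. -/
def tau (x : GS k n) : GS k n := (x.1 ∘ ⇑x.2, x.2⁻¹)

lemma tau_mul (x y : GS k n) : tau (x * y) = tau y * tau x := by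
  refine Prod.ext ?_ ?_
  · funext i
    show (x * y).1 ((x * y).2 i) = (tau y).1 ((tau x).2⁻¹ i) + (tau x).1 i
    show x.1 (y.2⁻¹ ((y.2 * x.2) i)) + y.1 ((y.2 * x.2) i)
      = y.1 (y.2 ((x.2⁻¹)⁻¹ i)) + x.1 (x.2 i)
    simp only [Equiv.Perm.mul_apply, Equiv.Perm.inv_def, Equiv.symm_apply_apply, Equiv.symm_symm]
    exact add_comm _ _
  · show ((x * y).2)⁻¹ = x.2⁻¹ * y.2⁻¹
    show (y.2 * x.2)⁻¹ = x.2⁻¹ * y.2⁻¹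
    rw [mul_inv_rev]

lemma tau_invol (x : GS k n) : tau (tau x) = x := by
  refine Prod.ext ?_ ?_
  · funext i
    show x.1 (x.2 (x.2⁻¹ i)) = x.1 i
    rw [Equiv.Perm.inv_def, Equiv.apply_symm_apply]
  · show (x.2⁻¹)⁻¹ = x.2
    rw [inv_inv]

lemma tau_one : tau (1 : GS k n) = 1 := by
  refine Prod.ext ?_ ?_
  · funext i
    rfl
  · show ((1 : Equiv.Perm (Fin n)))⁻¹ = 1
    simp

lemma tau_inv (x : GS k n) : tau x⁻¹ = (tau x)⁻¹ := by
  apply eq_inv_of_mul_eq_one_left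
  rw [← tau_mul, mul_inv_cancel, tau_one]

lemma tau_mem_K (hn : 1 ≤ n) {x : GS k n} (hx : x ∈ K k n hn) : tau x ∈ K k n hn := by
  obtain ⟨h1, h2⟩ := hx
  constructor
  · show x.2⁻¹ (lastPt n hn) = lastPt n hn
    exact Equiv.Perm.inv_eq_iff_eq.2 h1.symm
  · show x.1 (x.2 (lastPt n hn)) = 0
    rw [h1, h2]

/-- `τ₀ x` is conjugate to `x` by an element of `K`. -/
theorem exists_conj (hn : 1 ≤ n) (x : GS k n) :
    ∃ a : GS k n, a ∈ K k n hn ∧ a * x * a⁻¹ = tau x := by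
  obtain ⟨f, p⟩ := x
  set ν := lastPt n hn with hν
  have hq := CombAux.qf_invol p ν
  set q : Equiv.Perm (Fin n) := Function.Involutive.toPerm (CombAux.qf p ν) hq with hqdef
  have hqcoe : ⇑q = CombAux.qf p ν := rfl
  have hqinv : q⁻¹ = q := by
    show q.symm = q
    exact Function.Involutive.toPerm_symm hq
  refine ⟨(CombAux.hf p ν f, q), ⟨?_, ?_⟩, ?_⟩
  · show q ν = ν
    exact CombAux.qf_nu p ν
  · exact CombAux.hf_nu p ν f
  · refine Prod.ext ?_ ?_
    · funext i
      show (CombAux.hf p ν f) (p⁻¹ ((q⁻¹)⁻¹ i)) + f ((q⁻¹)⁻¹ i)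
          + -(CombAux.hf p ν f) (q i) = f (p i)
      rw [hqinv, hqcoe]
      rw [← sub_eq_add_neg]
      exact CombAux.main_eq p ν f i
    · show q⁻¹ * (p * q) = p⁻¹
      rw [hqinv]
      apply Equiv.ext
      intro i
      show q (p (q i)) = p⁻¹ i
      rw [hqcoe]
      rw [CombAux.qf_p p ν (CombAux.qf p ν i), CombAux.qf_invol]

/-- `τ₀ x` lies in the double coset `K (x, z) K` coherently for pairs. -/
theorem double_coset (hn : 1 ≤ n) (g z : GS k n) (hz : z ∈ K k n hn) :
    ∃ a ∈ K k n hn, ∃ b ∈ K k n hn, a * g * b = tau g ∧ a * z * b = tau z := by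
  obtain ⟨c, hc, hconj⟩ := exists_conj hn (g * z⁻¹)
  refine ⟨tau z * c, mul_mem (tau_mem_K hn hz) hc,
    z⁻¹ * (tau z * c)⁻¹ * tau z,
    mul_mem (mul_mem (inv_mem hz) (inv_mem (mul_mem (tau_mem_K hn hz) hc))) (tau_mem_K hn hz),
    ?_, ?_⟩
  · have h1 : tau z * c * g * (z⁻¹ * (tau z * c)⁻¹ * tau z)
        = tau z * (c * (g * z⁻¹) * c⁻¹) * (tau z)⁻¹ * tau z := by
      group
    rw [h1, hconj, tau_mul, tau_inv]
    group
  · group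

end GSAux

namespace RepAux


theorem invariants_rank_le_one {H V : Type} [Group H] [Fintype H]
    [AddCommGroup V] [Module ℂ V] [FiniteDimensional ℂ V]
    (ρ : Representation ℂ H V)
    (hirr : ∀ W : Submodule ℂ V,
      (∀ (h : H) (v : V), v ∈ W → ρ h v ∈ W) → W = ⊥ ∨ W = ⊤)
    (K' : Subgroup H) (τ : H → H)
    (hτmul : ∀ x y, τ (x * y) = τ y * τ x)
    (hτinv : ∀ x, τ (τ x) = x)
    (hτK : ∀ z ∈ K', τ z ∈ K')
    (hτdc : ∀ h : H, ∃ a ∈ K', ∃ b ∈ K', a * h * b = τ h) :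
    Module.finrank ℂ
      ↥(⨅ z : ↥K', LinearMap.eqLocus (ρ (z : H)) (LinearMap.id : V →ₗ[ℂ] V)) ≤ 1 := by
  classical
  set W : Submodule ℂ V :=
    ⨅ z : ↥K', LinearMap.eqLocus (ρ (z : H)) (LinearMap.id : V →ₗ[ℂ] V) with hWdef
  have memW : ∀ v : V, v ∈ W ↔ ∀ z : ↥K', ρ (z : H) v = v := by
    intro v
    simp [hWdef, Submodule.mem_iInf, LinearMap.mem_eqLocus]
  set c : ℂ := (Fintype.card ↥K' : ℂ)⁻¹ with hcdef
  have hcard : (Fintype.card ↥K' : ℂ) ≠ 0 := by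
    exact_mod_cast Nat.cast_ne_zero.mpr Fintype.card_ne_zero
  set e : Module.End ℂ V := c • ∑ z : ↥K', (ρ (z : H) : Module.End ℂ V) with hedef
  -- absorption
  have habs_l : ∀ a : ↥K', e * ρ (a : H) = e := by
    intro a
    calc e * ρ (a : H) = c • ∑ z : ↥K', (ρ (z : H) * ρ (a : H) : Module.End ℂ V) := by
          rw [hedef, smul_mul_assoc, Finset.sum_mul]
      _ = c • ∑ z : ↥K', (ρ ((z * a : ↥K') : H) : Module.End ℂ V) := by
          congr 1
          apply Finset.sum_congr rfl
          intro z _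
          rw [← map_mul]
          rfl
      _ = c • ∑ z : ↥K', (ρ (z : H) : Module.End ℂ V) := by
          congr 1
          exact Fintype.sum_equiv (Equiv.mulRight a) _ _ (fun z => rfl)
      _ = e := hedef.symm
  have habs_r : ∀ a : ↥K', ρ (a : H) * e = e := by
    intro a
    calc ρ (a : H) * e = c • ∑ z : ↥K', (ρ (a : H) * ρ (z : H) : Module.End ℂ V) := by
          rw [hedef, mul_smul_comm, Finset.mul_sum]
      _ = c • ∑ z : ↥K', (ρ ((a * z : ↥K') : H) : Module.End ℂ V) := by
          congr 1
          apply Finset.sum_congr rfl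
          intro z _
          rw [← map_mul]
          rfl
      _ = c • ∑ z : ↥K', (ρ (z : H) : Module.End ℂ V) := by
          congr 1
          exact Fintype.sum_equiv (Equiv.mulLeft a) _ _ (fun z => rfl)
      _ = e := hedef.symm
  have hee : e * e = e := by
    calc e * e = c • ∑ z : ↥K', (e * ρ (z : H) : Module.End ℂ V) := by
          conv_lhs => rw [show (e * e : Module.End ℂ V) =
            e * (c • ∑ z : ↥K', (ρ (z : H) : Module.End ℂ V)) from by rw [← hedef]]
          rw [mul_smul_comm, Finset.mul_sum]
      _ = c • ∑ _z : ↥K', e := by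
          congr 1
          exact Finset.sum_congr rfl fun z _ => habs_l z
      _ = e := by
          rw [Finset.sum_const, Finset.card_univ, hcdef,
            ← Nat.cast_smul_eq_nsmul ℂ, smul_smul, inv_mul_cancel₀ hcard, one_smul]
  -- e fixes W, and maps into W
  have heId : ∀ v ∈ W, e v = v := by
    intro v hv
    rw [hedef]
    simp only [LinearMap.smul_apply, LinearMap.coe_sum, Finset.sum_apply]
    have : ∀ z : ↥K', ρ (z : H) v = v := (memW v).mp hv
    rw [Finset.sum_congr rfl fun z _ => this z, Finset.sum_const, Finset.card_univ,
      ← Nat.cast_smul_eq_nsmul ℂ, smul_smul, hcdef, inv_mul_cancel₀ hcard, one_smul]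
  have heW : ∀ v : V, e v ∈ W := by
    intro v
    rw [memW]
    intro a
    have := habs_r a
    calc ρ (a : H) (e v) = (ρ (a : H) * e) v := rfl
      _ = e v := by rw [this]
  -- the compressed operators
  set Sop : H → Module.End ℂ V := fun h => e * ρ h * e with hSdef
  have hSopW : ∀ (h : H) (v : V), Sop h v ∈ W := by
    intro h v
    show e ((ρ h * e) v) ∈ W
    exact heW _
  have middle : ∀ A B : Module.End ℂ V, A * e * B = c • ∑ z : ↥K', A * ρ (z : H) * B := by
    intro A B
    rw [hedef, mul_smul_comm, smul_mul_assoc]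
    congr 1
    rw [Finset.mul_sum, Finset.sum_mul]
  have hexp : ∀ x y : H, Sop x * Sop y = c • ∑ z : ↥K', Sop (x * (z : H) * y) := by
    intro x y
    have step1 : Sop x * Sop y = (e * ρ x) * e * (ρ y * e) := by
      show (e * ρ x * e) * (e * ρ y * e) = _
      calc (e * ρ x * e) * (e * ρ y * e) = (e * ρ x) * (e * e) * (ρ y * e) := by noncomm_ring
        _ = (e * ρ x) * e * (ρ y * e) := by rw [hee]
    rw [step1, middle]
    congr 1
    apply Finset.sum_congr rfl
    intro z _
    show (e * ρ x) * ρ (z : H) * (ρ y * e) = e * ρ (x * (z : H) * y) * e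
    rw [map_mul, map_mul]
    noncomm_ring
  have hC1 : ∀ h : H, Sop (τ h) = Sop h := by
    intro h
    obtain ⟨a, ha, b, hb, hab⟩ := hτdc h
    rw [← hab]
    show e * ρ (a * h * b) * e = e * ρ h * e
    rw [map_mul, map_mul]
    calc e * (ρ a * ρ h * ρ b) * e = (e * ρ a) * ρ h * (ρ b * e) := by noncomm_ring
      _ = e * ρ h * e := by rw [habs_l ⟨a, ha⟩, habs_r ⟨b, hb⟩]
  -- commutativity
  have hτKbij : Function.Bijective (fun z : ↥K' => (⟨τ (z : H), hτK _ z.2⟩ : ↥K')) := by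
    apply Function.Involutive.bijective
    intro z
    ext
    exact hτinv (z : H)
  have hcomm : ∀ x y : H, Sop x * Sop y = Sop y * Sop x := by
    intro x y
    calc Sop x * Sop y = c • ∑ z : ↥K', Sop (x * (z : H) * y) := hexp x y
      _ = c • ∑ z : ↥K', Sop (τ y * (τ (z : H)) * τ x) := by
          congr 1
          apply Finset.sum_congr rfl
          intro z _
          rw [← hC1 (x * (z : H) * y)]
          congr 1
          rw [hτmul, hτmul, mul_assoc]
      _ = c • ∑ w : ↥K', Sop (τ y * (w : H) * τ x) := by
          congr 1
          exact Fintype.sum_bijective _ hτKbij _ _ (fun z => rfl)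
      _ = Sop (τ y) * Sop (τ x) := (hexp (τ y) (τ x)).symm
      _ = Sop y * Sop x := by rw [hC1, hC1]
  -- irreducibility of the compressed action
  have hirrW : ∀ U : Submodule ℂ V, U ≤ W → (∀ (h : H) (v : V), v ∈ U → Sop h v ∈ U) →
      U ≠ ⊥ → W ≤ U := by
    intro U hUW hUinv hUne
    set X : Submodule ℂ V := Submodule.span ℂ {w | ∃ (h : H) (u : V), u ∈ U ∧ w = ρ h u}
      with hXdef
    have hXinv : ∀ (h : H) (v : V), v ∈ X → ρ h v ∈ X := by
      intro h v hv
      induction hv using Submodule.span_induction with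
      | mem w hw =>
          obtain ⟨h', u, hu, rfl⟩ := hw
          apply Submodule.subset_span
          exact ⟨h * h', u, hu, by rw [map_mul]; rfl⟩
      | zero => rw [map_zero]; exact Submodule.zero_mem _
      | add x y hx hy ihx ihy => rw [map_add]; exact Submodule.add_mem _ ihx ihy
      | smul a x hx ihx => rw [map_smul]; exact Submodule.smul_mem _ _ ihx
    have hXne : X ≠ ⊥ := by
      obtain ⟨u, huU, hune⟩ := U.ne_bot_iff.mp hUne
      refine X.ne_bot_iff.mpr ⟨u, ?_, hune⟩
      apply Submodule.subset_span
      exact ⟨1, u, huU, by rw [map_one]; rfl⟩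
    have hXtop : X = ⊤ := (hirr X hXinv).resolve_left hXne
    intro w hw
    have hwX : w ∈ X := hXtop.symm ▸ Submodule.mem_top
    have heX : ∀ v, v ∈ X → e v ∈ U := by
      intro v hv
      induction hv using Submodule.span_induction with
      | mem w hw =>
          obtain ⟨h', u, hu, rfl⟩ := hw
          have h1 : e (ρ h' u) = Sop h' u := by
            show _ = (e * ρ h' * e) u
            rw [Module.End.mul_apply, Module.End.mul_apply, heId u (hUW hu)]
          rw [h1]
          exact hUinv h' u hu
      | zero => rw [map_zero]; exact Submodule.zero_mem _
      | add x y hx hy ihx ihy => rw [map_add]; exact Submodule.add_mem _ ihx ihy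
      | smul a x hx ihx => rw [map_smul]; exact Submodule.smul_mem _ _ ihx
    have := heX w hwX
    rwa [heId w hw] at this
  -- conclusion
  by_cases hWbot : W = ⊥
  · rw [hWbot]
    simp
  · obtain ⟨v0, hv0W, hv0⟩ := W.ne_bot_iff.mp hWbot
    have hmap : ∀ h : H, ∀ w ∈ W, Sop h w ∈ W := fun h w _ => hSopW h w
    have hscal : ∀ h : H, ∃ lam : ℂ, ∀ w ∈ W, Sop h w = lam • w := by
      intro h
      set T : Module.End ℂ ↥W := (Sop h).restrict (hmap h) with hTdef
      haveI : Nontrivial ↥W := Submodule.nontrivial_iff_ne_bot.mpr hWbot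
      obtain ⟨lam, hlam⟩ := Module.End.exists_eigenvalue T
      set U : Submodule ℂ V := (Module.End.eigenspace T lam).map W.subtype with hUdef
      have hUle : U ≤ W := Submodule.map_subtype_le _ _
      have hUinv : ∀ (h' : H) (v : V), v ∈ U → Sop h' v ∈ U := by
        rintro h' _ ⟨u, hu, rfl⟩
        refine ⟨(Sop h').restrict (hmap h') u, ?_, rfl⟩
        have hu' : T u = lam • u := Module.End.mem_eigenspace_iff.mp hu
        apply Module.End.mem_eigenspace_iff.mpr
        apply Subtype.ext
        show Sop h ((Sop h' (u : V))) = (lam • ((Sop h').restrict (hmap h') u) : ↥W)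
        have hval : ((lam • ((Sop h').restrict (hmap h') u) : ↥W) : V) = lam • Sop h' (u : V) := rfl
        rw [hval]
        have h2 : Sop h (Sop h' (u : V)) = Sop h' (Sop h (u : V)) := by
          rw [← Module.End.mul_apply, ← Module.End.mul_apply, hcomm]
        rw [h2]
        have h3 : Sop h (u : V) = lam • (u : V) := by
          have := congrArg (Subtype.val) hu'
          exact this
        rw [h3, map_smul]
      have hUne : U ≠ ⊥ := by
        obtain ⟨u, hu⟩ := hlam.exists_hasEigenvector
        refine U.ne_bot_iff.mpr ⟨(u : V), ⟨u, hu.1, rfl⟩, ?_⟩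
        simpa using hu.2
      have hWU := hirrW U hUle hUinv hUne
      refine ⟨lam, fun w hw => ?_⟩
      obtain ⟨u, hu, rfl⟩ := hWU hw
      have hu' : T u = lam • u := Module.End.mem_eigenspace_iff.mp hu
      have := congrArg (Subtype.val) hu'
      exact this
    set U0 : Submodule ℂ V := Submodule.span ℂ {v0} with hU0def
    have hU0le : U0 ≤ W := by
      rw [hU0def, Submodule.span_le]
      intro x hx
      rw [Set.mem_singleton_iff] at hx
      subst hx
      exact hv0W
    have hU0inv : ∀ (h : H) (v : V), v ∈ U0 → Sop h v ∈ U0 := by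
      intro h v hv
      obtain ⟨lam, hlam⟩ := hscal h
      rw [hlam v (hU0le hv)]
      exact Submodule.smul_mem _ _ hv
    have hU0ne : U0 ≠ ⊥ := by
      rw [hU0def]
      simpa using hv0
    have hWU0 : W = U0 := le_antisymm (hirrW U0 hU0le hU0inv hU0ne) hU0le
    rw [hWU0, hU0def]
    exact le_of_eq (finrank_span_singleton hv0)


end RepAux

open GS in
/-- The induced representation `1_{diag K}^{G × K}` is multiplicity free:
in every irreducible finite-dimensional complex representation of `G × K`, the subspace of
vectors fixed by all `(z, z)` with `z ∈ K` has dimension at most `1`. -/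
theorem diag_invariants_dim_le_one (k n : ℕ) (hk : 1 ≤ k) (hn : 1 ≤ n)
    (V : Type) [AddCommGroup V] [Module ℂ V] [FiniteDimensional ℂ V] [Nontrivial V]
    (ρ : Representation ℂ (GS k n × ↥(K k n hn)) V)
    (hirr : ∀ W : Submodule ℂ V,
      (∀ (h : GS k n × ↥(K k n hn)) (v : V), v ∈ W → ρ h v ∈ W) → W = ⊥ ∨ W = ⊤) :
    Module.finrank ℂ
      ↥(⨅ z : ↥(K k n hn),
        LinearMap.eqLocus (ρ ((z : GS k n), z)) (LinearMap.id : V →ₗ[ℂ] V)) ≤ 1 := by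
  haveI : NeZero k := ⟨by omega⟩
  haveI : Fintype (GS k n) :=
    inferInstanceAs (Fintype ((Fin n → ZMod k) × Equiv.Perm (Fin n)))
  haveI : Fintype ↥(K k n hn) := Fintype.ofFinite _
  let H := GS k n × ↥(K k n hn)
  haveI : Fintype H := inferInstanceAs (Fintype (GS k n × ↥(K k n hn)))
  let K' : Subgroup H :=
    { carrier := {w | w.1 = (w.2 : GS k n)}
      one_mem' := rfl
      mul_mem' := by
        rintro ⟨a1, a2⟩ ⟨b1, b2⟩ ha hb
        show a1 * b1 = ((a2 * b2 : ↥(K k n hn)) : GS k n)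
        rw [show a1 = (a2 : GS k n) from ha, show b1 = (b2 : GS k n) from hb]
        rfl
      inv_mem' := by
        rintro ⟨a1, a2⟩ ha
        show a1⁻¹ = ((a2⁻¹ : ↥(K k n hn)) : GS k n)
        rw [show a1 = (a2 : GS k n) from ha]
        rfl }
  let τH : H → H := fun w =>
    (GSAux.tau w.1, ⟨GSAux.tau (w.2 : GS k n), GSAux.tau_mem_K hn w.2.2⟩)
  have hτmul : ∀ x y : H, τH (x * y) = τH y * τH x := by
    intro x y
    refine Prod.ext (GSAux.tau_mul x.1 y.1) (Subtype.ext ?_)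
    exact GSAux.tau_mul (x.2 : GS k n) (y.2 : GS k n)
  have hτinv : ∀ x : H, τH (τH x) = x := by
    intro x
    refine Prod.ext (GSAux.tau_invol x.1) (Subtype.ext ?_)
    exact GSAux.tau_invol (x.2 : GS k n)
  have hτK : ∀ z ∈ K', τH z ∈ K' := by
    intro z hz
    show GSAux.tau z.1 = GSAux.tau (z.2 : GS k n)
    rw [show z.1 = (z.2 : GS k n) from hz]
  have hτdc : ∀ h : H, ∃ a ∈ K', ∃ b ∈ K', a * h * b = τH h := by
    rintro ⟨g, z⟩
    obtain ⟨a, ha, b, hb, h1, h2⟩ := GSAux.double_coset hn g (z : GS k n) z.2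
    refine ⟨(a, ⟨a, ha⟩), rfl, (b, ⟨b, hb⟩), rfl, ?_⟩
    exact Prod.ext h1 (Subtype.ext h2)
  have main := RepAux.invariants_rank_le_one ρ hirr K' τH hτmul hτinv hτK hτdc
  have htrans : (⨅ z : ↥(K k n hn),
        LinearMap.eqLocus (ρ ((z : GS k n), z)) (LinearMap.id : V →ₗ[ℂ] V))
      = ⨅ w : ↥K', LinearMap.eqLocus (ρ (w : H)) (LinearMap.id : V →ₗ[ℂ] V) := by
    apply le_antisymm
    · apply le_iInf
      intro w
      have hw : (w : H) = ((((w : H).2 : GS k n)), (w : H).2) := Prod.ext w.2 rfl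
      rw [hw]
      exact iInf_le _ ((w : H).2)
    · apply le_iInf
      intro z
      exact iInf_le (fun w : ↥K' => LinearMap.eqLocus (ρ (w : H)) LinearMap.id)
        ⟨((z : GS k n), z), rfl⟩
  rw [htrans]
  exact main
end
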